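/- arXiv:2410.02665 — 5 statements merged into one kernel-verified Lean document; each statement's English description precedes it below -/
import Mathlib

section
/- Let f : D_f → {0,1} and g : D_g → {0,1} be partial Boolean functions, and let COR(f,g) be the partial function taking input (x,y) with x ∈ D_f, y ∈ D_g under the promise f(x) = g(y), outputting this common value. Then the p-parallel deterministic query complexity of COR(f,g) equals min(D^{p∥}(f), D^{p∥}(g)) up to a constant factor: D^{p∥}(COR(f,g)) ≤ 2·min(D^{p∥}(f), D^{p∥}(g)) and D^{p∥}(COR(f,g)) ≥ min(D^{p∥}(f), D^{p∥}(g)). -/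
/-!
`D^{p∥}` is the value of an adversary game: each round the algorithm names at most `p` positions,
the adversary fixes their values, and the adversary wins if `F` is still nonconstant on the inputs
consistent with its answers. A `t`-round algorithm beating every adversary gives two inputs with
equal transcripts and different values; conversely, the algorithm that keeps track of the set of
consistent inputs (not of the transcript, whose order is arbitrary) and always queries a set that
lowers the adversary's remaining number of rounds succeeds.

In this game `COR(f,g)` is exactly as hard as the easier of `f` and `g`. An adversary for `COR`
restricts to adversaries for `f` and for `g`, since on the promise its value is both `f x` and
`g y`. Conversely, adversaries for `f` and `g` combine into one for `COR` by splitting each query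
into its `x`- and `y`-parts; at the end they leave inputs with `f x = g y = false` and with
`f x = g y = true`.
-/

/-- A (parallel) query algorithm: given the history of query-answer pairs so far,
it names the set of positions to query in the next round, and can output a bit. -/
structure QAlg (ι α : Type*) where
  query : List (ι × α) → Finset ι
  out : List (ι × α) → Bool

namespace QAlg

variable {ι α : Type*}

/-- The history of query-answer pairs after `t` rounds on input `x`. -/
noncomputable def hist (A : QAlg ι α) (x : ι → α) : ℕ → List (ι × α)
  | 0 => []
  | t + 1 => hist A x t ++ ((A.query (hist A x t)).toList.map fun i => (i, x i))

/-- The algorithm queries at most `p` positions per round. -/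
def Parallel (A : QAlg ι α) (p : ℕ) : Prop := ∀ h, (A.query h).card ≤ p

/-- The algorithm computes `F` on every input in `dom` after `t` rounds. -/
def Computes (A : QAlg ι α) (dom : Set (ι → α)) (F : (ι → α) → Bool) (t : ℕ) : Prop :=
  ∀ x ∈ dom, A.out (A.hist x t) = F x

end QAlg

/-- `Dpar p dom F` : the `p`-parallel deterministic query complexity of the
(partial) function `F` with domain `dom`, i.e. the least number of rounds of
`p` non-adaptive queries needed to compute `F` on all of `dom`. -/
noncomputable def Dpar {ι α : Type*} (p : ℕ) (dom : Set (ι → α)) (F : (ι → α) → Bool) : ℕ :=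
  sInf {t | ∃ A : QAlg ι α, A.Parallel p ∧ A.Computes dom F t}

/-- The promise problem `COR(f,g)`: given oracle access to `x ∈ D_f` and `y ∈ D_g`
with the promise `f x = g y`, output the common value.  Its domain: -/
def corDom {Nf Ng : ℕ} (Df : Set (Fin Nf → Bool)) (Dg : Set (Fin Ng → Bool))
    (f : (Fin Nf → Bool) → Bool) (g : (Fin Ng → Bool) → Bool) :
    Set ((Fin Nf ⊕ Fin Ng) → Bool) :=
  {z | (z ∘ Sum.inl) ∈ Df ∧ (z ∘ Sum.inr) ∈ Dg ∧ f (z ∘ Sum.inl) = g (z ∘ Sum.inr)}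

/-- The value of `COR(f,g)` on an input satisfying the promise. -/
def corFun {Nf Ng : ℕ} (f : (Fin Nf → Bool) → Bool) :
    ((Fin Nf ⊕ Fin Ng) → Bool) → Bool :=
  fun z => f (z ∘ Sum.inl)

namespace QAlg

variable {ι α : Type*}

def agreeOn (C : Set (ι → α)) (S : Finset ι) (σ : ι → α) : Set (ι → α) :=
  {x ∈ C | ∀ i ∈ S, x i = σ i}

/-- `Evasive p F t C`: answering `t` rounds of at most `p` queries each, an adversary can keep `F`
nonconstant on the inputs of `C` consistent with its answers. -/
def Evasive (p : ℕ) (F : (ι → α) → Bool) : ℕ → Set (ι → α) → Prop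
  | 0, C => (F '' C).Nontrivial
  | t + 1, C => ∀ S : Finset ι, S.card ≤ p → ∃ σ : ι → α, Evasive p F t (agreeOn C S σ)

def consistent (C : Set (ι → α)) (h : List (ι × α)) : Set (ι → α) :=
  {x ∈ C | ∀ q ∈ h, x q.1 = q.2}

variable {p t : ℕ} {F : (ι → α) → Bool} {C D : Set (ι → α)}

theorem agreeOn_mono (hCD : C ⊆ D) (S : Finset ι) (σ : ι → α) :
    agreeOn C S σ ⊆ agreeOn D S σ :=
  fun _ hx => ⟨hCD hx.1, hx.2⟩

@[simp]
theorem agreeOn_empty (σ : ι → α) : agreeOn C ∅ σ = C := by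
  ext; simp [agreeOn]

theorem Evasive.mono (hCD : C ⊆ D) (H : Evasive p F t C) : Evasive p F t D := by
  induction t generalizing C D with
  | zero => exact H.mono (Set.image_mono hCD)
  | succ t ih =>
    intro S hS
    obtain ⟨σ, hσ⟩ := H S hS
    exact ⟨σ, ih (agreeOn_mono hCD S σ) hσ⟩

theorem Evasive.of_succ (H : Evasive p F (t + 1) C) : Evasive p F t C := by
  obtain ⟨σ, hσ⟩ := H ∅ (by simp)
  rwa [agreeOn_empty] at hσ

theorem evasive_antitone : Antitone fun t => Evasive p F t C :=
  antitone_nat_of_succ_le fun _ => Evasive.of_succ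

theorem evasive_zero_iff : Evasive 0 F t C ↔ (F '' C).Nontrivial := by
  refine ⟨evasive_antitone t.zero_le, fun H => ?_⟩
  induction t with
  | zero => exact H
  | succ t ih =>
    intro S hS
    obtain rfl := Finset.card_eq_zero.1 (Nat.le_zero.1 hS)
    obtain ⟨x, -⟩ := H.nonempty.of_image
    exact ⟨x, by rwa [agreeOn_empty]⟩

theorem Evasive.exists_eqOn_of_card_le (hp : 1 ≤ p) (T : Finset ι) (hT : T.card ≤ t)
    (H : Evasive p F t C) : ∃ x ∈ C, ∃ y ∈ C, F x ≠ F y ∧ Set.EqOn x y T := by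
  classical
  induction T using Finset.induction_on generalizing t C with
  | empty =>
    obtain ⟨_, ⟨x, hx, rfl⟩, _, ⟨y, hy, rfl⟩, hne⟩ := evasive_antitone t.zero_le H
    exact ⟨x, hx, y, hy, hne, by simp⟩
  | insert i T hi ih =>
    rw [Finset.card_insert_of_notMem hi] at hT
    obtain ⟨t, rfl⟩ := Nat.exists_eq_add_of_lt hT
    obtain ⟨σ, hσ⟩ := H {i} (by simpa using hp)
    obtain ⟨x, hx, y, hy, hne, hxy⟩ := ih (by omega) hσ
    refine ⟨x, hx.1, y, hy.1, hne, ?_⟩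
    rw [Finset.coe_insert]
    rintro j (rfl | hj)
    · exact (hx.2 j (Finset.mem_singleton_self j)).trans (hy.2 j (Finset.mem_singleton_self j)).symm
    · exact hxy hj

theorem Parallel.exists_ne_hist_eq {A : QAlg ι α} (hA : A.Parallel p) {s : ℕ}
    {h : List (ι × α)} (hC : ∀ x ∈ C, A.hist x s = h) (H : Evasive p F t C) :
    ∃ x ∈ C, ∃ y ∈ C, F x ≠ F y ∧ A.hist x (s + t) = A.hist y (s + t) := by
  induction t generalizing s h C with
  | zero =>
    obtain ⟨_, ⟨x, hx, rfl⟩, _, ⟨y, hy, rfl⟩, hne⟩ := H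
    exact ⟨x, hx, y, hy, hne, (hC x hx).trans (hC y hy).symm⟩
  | succ t ih =>
    obtain ⟨σ, hσ⟩ := H (A.query h) (hA h)
    have hC' : ∀ x ∈ agreeOn C (A.query h) σ,
        A.hist x (s + 1) = h ++ (A.query h).toList.map fun i => (i, σ i) := by
      rintro x ⟨hx, hxσ⟩
      rw [hist, hC x hx]
      exact congrArg (h ++ ·) <| List.map_congr_left fun i hi => by
        rw [hxσ i (Finset.mem_toList.1 hi)]
    obtain ⟨x, hx, y, hy, hne, hxy⟩ := ih hC' hσ
    exact ⟨x, hx.1, y, hy.1, hne, by rwa [← add_assoc, add_right_comm]⟩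

theorem Parallel.not_evasive_of_computes {A : QAlg ι α} (hA : A.Parallel p)
    (hAC : A.Computes C F t) : ¬Evasive p F t C := fun H => by
  obtain ⟨x, hx, y, hy, hne, hxy⟩ := hA.exists_ne_hist_eq (s := 0) (fun _ _ => rfl) H
  rw [zero_add] at hxy
  exact hne ((hAC x hx).symm.trans (hxy ▸ hAC y hy))

theorem consistent_nil : consistent C [] = C := by
  ext; simp [consistent]

theorem consistent_append_query (h : List (ι × α)) (S : Finset ι) (x : ι → α) :
    consistent C (h ++ S.toList.map fun i => (i, x i)) = agreeOn (consistent C h) S x := by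
  ext y
  simp only [consistent, agreeOn, Set.mem_ofPred_eq, List.forall_mem_append, List.forall_mem_map,
    Finset.mem_toList]
  tauto

theorem mem_consistent_hist (A : QAlg ι α) {x : ι → α} (hx : x ∈ C) (s : ℕ) :
    x ∈ consistent C (A.hist x s) := by
  induction s with
  | zero => rwa [hist, consistent_nil]
  | succ s ih =>
    rw [hist, consistent_append_query]
    exact ⟨ih, fun _ _ => rfl⟩

open Classical in
/-- At history `h`, query a set after which the adversary survives one round fewer on the
inputs consistent with `h`. -/
noncomputable def optimal (p : ℕ) (F : (ι → α) → Bool) (C : Set (ι → α)) : QAlg ι α where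
  query h :=
    if hS : ∃ S : Finset ι, S.card ≤ p ∧ ∀ σ, ¬Evasive p F
        (sInf {t | ¬Evasive p F t (consistent C h)} - 1) (agreeOn (consistent C h) S σ)
    then hS.choose else ∅
  out h := if hD : (consistent C h).Nonempty then F hD.some else false

theorem optimal_parallel : (optimal p F C).Parallel p := fun h => by
  dsimp only [optimal]
  split_ifs with hS
  exacts [hS.choose_spec.1, by simp]

theorem not_evasive_agreeOn_optimal_query {h : List (ι × α)}
    (H : ¬Evasive p F (t + 1) (consistent C h)) (σ : ι → α) :
    ¬Evasive p F t (agreeOn (consistent C h) ((optimal p F C).query h) σ) := by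
  set D := consistent C h
  set v := sInf {t | ¬Evasive p F t D}
  have hv : ¬Evasive p F v D := Nat.sInf_mem (s := {t | ¬Evasive p F t D}) ⟨_, H⟩
  have hvt : v ≤ t + 1 := Nat.sInf_le H
  have hS : ∃ S : Finset ι, S.card ≤ p ∧ ∀ σ, ¬Evasive p F (v - 1) (agreeOn D S σ) := by
    rcases Nat.eq_zero_or_eq_succ_pred v with h0 | hsucc
    · exact ⟨∅, by simp, fun σ => by rw [agreeOn_empty, h0]; rwa [h0] at hv⟩
    · rw [hsucc, Evasive] at hv
      push Not at hv
      exact hv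
  have hq : (optimal p F C).query h = hS.choose := dif_pos hS
  rw [hq]
  exact fun H' => hS.choose_spec.2 σ (evasive_antitone (by omega) H')

theorem not_evasive_consistent_optimal_hist (x : ι → α) :
    ∀ s u, ¬Evasive p F (u + s) C → ¬Evasive p F u (consistent C ((optimal p F C).hist x s))
  | 0, u, H => by rwa [hist, consistent_nil]
  | s + 1, u, H => by
    rw [hist, consistent_append_query]
    exact not_evasive_agreeOn_optimal_query
      (not_evasive_consistent_optimal_hist x s (u + 1) (by rwa [add_right_comm, add_assoc])) x

theorem optimal_out {h : List (ι × α)} (hD : (consistent C h).Nonempty) :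
    (optimal p F C).out h = F hD.some :=
  dif_pos hD

theorem optimal_computes (H : ¬Evasive p F t C) : (optimal p F C).Computes C F t := by
  intro x hx
  have hconst := not_evasive_consistent_optimal_hist x t 0 (by rwa [zero_add])
  have hxD := mem_consistent_hist (optimal p F C) hx t
  rw [optimal_out ⟨x, hxD⟩]
  exact Set.not_nontrivial_iff.1 hconst (Set.mem_image_of_mem F (Set.Nonempty.some_mem _))
    (Set.mem_image_of_mem F hxD)

theorem exists_parallel_computes_iff :
    (∃ A : QAlg ι α, A.Parallel p ∧ A.Computes C F t) ↔ ¬Evasive p F t C :=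
  ⟨fun ⟨_, hA, hAC⟩ => hA.not_evasive_of_computes hAC,
    fun H => ⟨optimal p F C, optimal_parallel, optimal_computes H⟩⟩

end QAlg

open QAlg

section Dpar

variable {ι α : Type*} {p t : ℕ} {F : (ι → α) → Bool} {C : Set (ι → α)}

theorem dpar_eq_sInf_not_evasive : Dpar p C F = sInf {t | ¬Evasive p F t C} :=
  congrArg sInf (Set.ext fun _ => exists_parallel_computes_iff)

theorem dpar_le_of_not_evasive (H : ¬Evasive p F t C) : Dpar p C F ≤ t :=
  dpar_eq_sInf_not_evasive ▸ Nat.sInf_le H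

theorem evasive_of_lt_dpar (ht : t < Dpar p C F) : Evasive p F t C := by
  by_contra H
  exact (dpar_le_of_not_evasive H).not_gt ht

theorem not_evasive_dpar [Fintype ι] (hp : 1 ≤ p) : ¬Evasive p F (Dpar p C F) C := by
  rw [dpar_eq_sInf_not_evasive]
  refine Nat.sInf_mem (s := {t | ¬Evasive p F t C}) ⟨Fintype.card ι, fun H => ?_⟩
  obtain ⟨x, -, y, -, hne, hxy⟩ := H.exists_eqOn_of_card_le hp Finset.univ le_rfl
  exact hne (congrArg F (funext fun i => hxy (Finset.mem_coe.2 (Finset.mem_univ i))))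

theorem dpar_le_dpar_of_evasive {κ : Type*} [Fintype κ] {G : (κ → α) → Bool}
    {D : Set (κ → α)} (hp : 1 ≤ p) (h : ∀ t, Evasive p F t C → Evasive p G t D) :
    Dpar p C F ≤ Dpar p D G :=
  dpar_le_of_not_evasive fun H => not_evasive_dpar hp (h _ H)

theorem dpar_zero : Dpar 0 C F = 0 := by
  rw [dpar_eq_sInf_not_evasive, Nat.sInf_eq_zero]
  simp only [evasive_zero_iff]
  by_cases H : (F '' C).Nontrivial
  · exact Or.inr (Set.eq_empty_of_forall_notMem fun _ h => h H)
  · exact Or.inl H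

end Dpar

theorem QAlg.Evasive.comp_embedding {ι κ α : Type*} {p t : ℕ} {F : (ι → α) → Bool}
    {G : (κ → α) → Bool} {C : Set (ι → α)} (e : κ ↪ ι) (hFG : ∀ z ∈ C, F z = G (z ∘ e))
    (H : Evasive p F t C) : Evasive p G t ((· ∘ e) '' C) := by
  induction t generalizing C with
  | zero =>
    rwa [Evasive, Set.image_image, Set.image_congr fun z hz => (hFG z hz).symm]
  | succ t ih =>
    intro S hS
    obtain ⟨σ, hσ⟩ := H (S.map e) (by rwa [Finset.card_map])
    refine ⟨σ ∘ e, (ih (fun z hz => hFG z hz.1) hσ).mono ?_⟩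
    rintro _ ⟨z, hz, rfl⟩
    exact ⟨⟨z, hz.1, rfl⟩, fun i hi => hz.2 (e i) (Finset.mem_map_of_mem e hi)⟩

section Cor

variable {Nf Ng p t : ℕ} {Df : Set (Fin Nf → Bool)} {Dg : Set (Fin Ng → Bool)}
  {f : (Fin Nf → Bool) → Bool} {g : (Fin Ng → Bool) → Bool}

theorem corDom_agreeOn_subset (S : Finset (Fin Nf ⊕ Fin Ng)) (σf : Fin Nf → Bool)
    (σg : Fin Ng → Bool) :
    corDom (agreeOn Df S.toLeft σf) (agreeOn Dg S.toRight σg) f g ⊆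
      agreeOn (corDom Df Dg f g) S (Sum.elim σf σg) := by
  rintro z ⟨⟨hzf, hσf⟩, ⟨hzg, hσg⟩, hfg⟩
  refine ⟨⟨hzf, hzg, hfg⟩, ?_⟩
  rintro (i | i) hi
  exacts [hσf i (Finset.mem_toLeft.2 hi), hσg i (Finset.mem_toRight.2 hi)]

theorem QAlg.Evasive.cor (hf : Evasive p f t Df) (hg : Evasive p g t Dg) :
    Evasive p (corFun f) t (corDom Df Dg f g) := by
  induction t generalizing Df Dg with
  | zero =>
    obtain ⟨_, ⟨x₀, hx₀, rfl⟩, _, ⟨x₁, hx₁, rfl⟩, hx⟩ := hf.exists_lt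
    obtain ⟨_, ⟨y₀, hy₀, rfl⟩, _, ⟨y₁, hy₁, rfl⟩, hy⟩ := hg.exists_lt
    rw [Bool.lt_iff] at hx hy
    have hz₀ : Sum.elim x₀ y₀ ∈ corDom Df Dg f g := ⟨hx₀, hy₀, hx.1.trans hy.1.symm⟩
    have hz₁ : Sum.elim x₁ y₁ ∈ corDom Df Dg f g := ⟨hx₁, hy₁, hx.2.trans hy.2.symm⟩
    exact Set.nontrivial_of_lt (Set.mem_image_of_mem _ hz₀) (Set.mem_image_of_mem _ hz₁)
      (Bool.lt_iff.2 hx)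
  | succ t ih =>
    intro S hS
    obtain ⟨σf, hσf⟩ := hf S.toLeft (S.card_toLeft_le.trans hS)
    obtain ⟨σg, hσg⟩ := hg S.toRight (S.card_toRight_le.trans hS)
    exact ⟨Sum.elim σf σg, (ih hσf hσg).mono (corDom_agreeOn_subset S σf σg)⟩

end Cor

/-- `D^{p∥}(COR(f,g))` equals `min(D^{p∥}(f), D^{p∥}(g))` up to a
factor `2`: it is at most `2·min(D^{p∥}(f), D^{p∥}(g))` and at least
`min(D^{p∥}(f), D^{p∥}(g))`. -/
theorem cor_det_parallel (Nf Ng p : ℕ)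
    (Df : Set (Fin Nf → Bool)) (Dg : Set (Fin Ng → Bool))
    (f : (Fin Nf → Bool) → Bool) (g : (Fin Ng → Bool) → Bool) :
    Dpar p (corDom Df Dg f g) (corFun f) ≤ 2 * min (Dpar p Df f) (Dpar p Dg g) ∧
      min (Dpar p Df f) (Dpar p Dg g) ≤ Dpar p (corDom Df Dg f g) (corFun f) := by
  rcases Nat.eq_zero_or_pos p with rfl | hp
  · simp [dpar_zero]
  have hf : Dpar p (corDom Df Dg f g) (corFun f) ≤ Dpar p Df f :=
    dpar_le_dpar_of_evasive hp fun _ H =>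
      (H.comp_embedding .inl fun _ _ => rfl).mono (by rintro _ ⟨z, hz, rfl⟩; exact hz.1)
  have hg : Dpar p (corDom Df Dg f g) (corFun f) ≤ Dpar p Dg g :=
    dpar_le_dpar_of_evasive hp fun _ H =>
      (H.comp_embedding .inr fun _ hz => hz.2.2).mono (by rintro _ ⟨z, hz, rfl⟩; exact hz.2.1)
  refine ⟨by omega, ?_⟩
  by_contra! hlt
  exact not_evasive_dpar hp <|
    (evasive_of_lt_dpar (hlt.trans_le (min_le_left _ _))).cor
      (evasive_of_lt_dpar (hlt.trans_le (min_le_right _ _)))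
end

section
/- Let f : D_f → {0,1} and g : D_g → {0,1} be partial Boolean functions on n_f and n_g bits, with 0-sets X_0, Y_0 and 1-sets X_1, Y_1. If Γ^f ∈ R^{X_0×X_1} and Γ^g ∈ R^{Y_0×Y_1} are adversary matrices for f and g respectively, then the Kronecker product Γ = Γ^f ⊗ Γ^g is an adversary matrix for COR(f,g) (rows indexed by X_0×Y_0, columns by X_1×Y_1), and for each index i in the f-component, Γ_i = Γ^f_i ⊗ Γ^g, while for each index i in the g-component, Γ_i = Γ^f ⊗ Γ^g_i. Consequently, ‖Γ‖ / max_i ‖Γ_i‖ = min( ‖Γ^f‖/max_i ‖Γ^f_i‖ , ‖Γ^g‖/max_i ‖Γ^g_i‖ ). -/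
open scoped Kronecker

/-- The spectral norm (largest singular value) of a real matrix. -/
noncomputable def specNorm {m n : Type*} [Fintype m] [Fintype n] [DecidableEq n]
    (M : Matrix m n ℝ) : ℝ :=
  ‖LinearMap.toContinuousLinearMap
      ((Matrix.toEuclideanLin : Matrix m n ℝ ≃ₗ[ℝ] _) M)‖

section CorAux

open scoped Matrix.Norms.L2Operator
open Matrix

set_option linter.unusedSectionVars false
set_option linter.unusedVariables false

variable {m n p q : Type*} [Fintype m] [Fintype n] [Fintype p] [Fintype q]
  [DecidableEq m] [DecidableEq n] [DecidableEq p] [DecidableEq q]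

lemma specNorm_eq (M : Matrix m n ℝ) : specNorm M = ‖M‖ := rfl

lemma specNorm_nonneg (M : Matrix m n ℝ) : 0 ≤ specNorm M := by
  rw [specNorm_eq]; exact norm_nonneg _

lemma specNorm_eq_zero_iff (M : Matrix m n ℝ) : specNorm M = 0 ↔ M = 0 := by
  rw [specNorm_eq]; exact norm_eq_zero


/-- embed a plain vector into EuclideanSpace -/
noncomputable def ev {n : Type*} [Fintype n] (v : n → ℝ) : EuclideanSpace ℝ n :=
  (WithLp.equiv 2 (n → ℝ)).symm v

lemma ev_normsq (v : n → ℝ) : ‖ev v‖ ^ 2 = ∑ i, v i ^ 2 := by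
  rw [PiLp.norm_sq_eq_of_L2]
  simp [ev, Real.norm_eq_abs, sq_abs]

lemma norm_le_of_sq_le {a b : ℝ} (hb : 0 ≤ b) (ha : 0 ≤ a) (h : a ^ 2 ≤ b ^ 2) : a ≤ b := by
  nlinarith

lemma l2norm_mulVec (A : Matrix m n ℝ) (v : n → ℝ) :
    ‖ev (A *ᵥ v)‖ ≤ ‖A‖ * ‖ev v‖ := by
  simpa [ev] using Matrix.l2_opNorm_mulVec A ((WithLp.equiv 2 (n → ℝ)).symm v)

lemma l2norm_le_of_mulVec {A : Matrix m n ℝ} {c : ℝ} (hc : 0 ≤ c)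
    (h : ∀ v : n → ℝ, ‖ev (A *ᵥ v)‖ ≤ c * ‖ev v‖) : ‖A‖ ≤ c := by
  rw [Matrix.l2_opNorm_def]
  refine ContinuousLinearMap.opNorm_le_bound _ hc fun x => ?_
  simpa [ev, Matrix.toEuclideanLin_apply] using h ((WithLp.equiv 2 (n → ℝ)) x)

noncomputable def tv (u : n → ℝ) (w : q → ℝ) : n × q → ℝ := fun p => u p.1 * w p.2

lemma tv_norm (u : n → ℝ) (w : q → ℝ) : ‖ev (tv u w)‖ = ‖ev u‖ * ‖ev w‖ := by
  have h : ‖ev (tv u w)‖ ^ 2 = (‖ev u‖ * ‖ev w‖) ^ 2 := by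
    rw [mul_pow, ev_normsq, ev_normsq, ev_normsq, Fintype.sum_prod_type, Finset.sum_mul_sum]
    simp [tv, mul_pow]
  nlinarith [norm_nonneg (ev (tv u w)), mul_nonneg (norm_nonneg (ev u)) (norm_nonneg (ev w))]

lemma kron_mulVec_tv (A : Matrix m n ℝ) (B : Matrix p q ℝ) (u : n → ℝ) (w : q → ℝ) :
    (A ⊗ₖ B) *ᵥ tv u w = tv (A *ᵥ u) (B *ᵥ w) := by
  funext x
  simp only [Matrix.mulVec, dotProduct, tv, Fintype.sum_prod_type,
    Matrix.kroneckerMap_apply]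
  rw [Finset.sum_mul_sum]
  exact Finset.sum_congr rfl fun a _ => Finset.sum_congr rfl fun b _ => by ring

lemma one_kron_norm_le (B : Matrix p q ℝ) : ‖(1 : Matrix m m ℝ) ⊗ₖ B‖ ≤ ‖B‖ := by
  refine l2norm_le_of_mulVec (norm_nonneg _) fun v => ?_
  have hmv : ∀ x : m × p, (((1 : Matrix m m ℝ) ⊗ₖ B) *ᵥ v) x
      = (B *ᵥ (fun b => v (x.1, b))) x.2 := by
    rintro ⟨x, y⟩
    simp [Matrix.mulVec, dotProduct, Fintype.sum_prod_type, Matrix.one_apply, ite_mul]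
  refine norm_le_of_sq_le (mul_nonneg (norm_nonneg _) (norm_nonneg _)) (norm_nonneg _) ?_
  rw [ev_normsq, mul_pow, ev_normsq, Fintype.sum_prod_type]
  simp only [hmv]
  calc ∑ x : m, ∑ y : p, (B *ᵥ (fun b => v (x, b))) y ^ 2
      ≤ ∑ x : m, ‖B‖ ^ 2 * ∑ b, v (x, b) ^ 2 := by
        refine Finset.sum_le_sum fun x _ => ?_
        have h := l2norm_mulVec B (fun b => v (x, b))
        have h2 : ‖ev (B *ᵥ fun b => v (x, b))‖ ^ 2 ≤ (‖B‖ * ‖ev fun b => v (x, b)‖) ^ 2 := by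
          exact pow_le_pow_left₀ (norm_nonneg _) h 2
        rw [ev_normsq, mul_pow, ev_normsq] at h2
        exact h2
    _ = ‖B‖ ^ 2 * ∑ x : m, ∑ b, v (x, b) ^ 2 := by rw [Finset.mul_sum]
    _ = ‖B‖ ^ 2 * ∑ i : m × q, v i ^ 2 := by rw [Fintype.sum_prod_type]

lemma kron_one_norm_le (A : Matrix m n ℝ) : ‖A ⊗ₖ (1 : Matrix p p ℝ)‖ ≤ ‖A‖ := by
  refine l2norm_le_of_mulVec (norm_nonneg _) fun v => ?_
  have hmv : ∀ x : m × p, ((A ⊗ₖ (1 : Matrix p p ℝ)) *ᵥ v) x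
      = (A *ᵥ (fun a => v (a, x.2))) x.1 := by
    rintro ⟨x, y⟩
    simp [Matrix.mulVec, dotProduct, Fintype.sum_prod_type, Matrix.one_apply,
      mul_ite, Finset.sum_comm (γ := n)]
  refine norm_le_of_sq_le (mul_nonneg (norm_nonneg _) (norm_nonneg _)) (norm_nonneg _) ?_
  rw [ev_normsq, mul_pow, ev_normsq, Fintype.sum_prod_type]
  simp only [hmv]
  rw [Finset.sum_comm]
  calc ∑ y : p, ∑ x : m, (A *ᵥ (fun a => v (a, y))) x ^ 2
      ≤ ∑ y : p, ‖A‖ ^ 2 * ∑ a, v (a, y) ^ 2 := by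
        refine Finset.sum_le_sum fun y _ => ?_
        have h := l2norm_mulVec A (fun a => v (a, y))
        have h2 : ‖ev (A *ᵥ fun a => v (a, y))‖ ^ 2 ≤ (‖A‖ * ‖ev fun a => v (a, y)‖) ^ 2 :=
          pow_le_pow_left₀ (norm_nonneg _) h 2
        rw [ev_normsq, mul_pow, ev_normsq] at h2
        exact h2
    _ = ‖A‖ ^ 2 * ∑ y : p, ∑ a, v (a, y) ^ 2 := by rw [Finset.mul_sum]
    _ = ‖A‖ ^ 2 * ∑ i : n × p, v i ^ 2 := by rw [Fintype.sum_prod_type, Finset.sum_comm]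

lemma kron_norm_eq (A : Matrix m n ℝ) (B : Matrix p q ℝ) : ‖A ⊗ₖ B‖ = ‖A‖ * ‖B‖ := by
  refine le_antisymm ?_ ?_
  · have hfac : A ⊗ₖ B = (A ⊗ₖ (1 : Matrix p p ℝ)) * ((1 : Matrix n n ℝ) ⊗ₖ B) := by
      rw [← Matrix.mul_kronecker_mul, Matrix.mul_one, Matrix.one_mul]
    calc ‖A ⊗ₖ B‖ ≤ ‖A ⊗ₖ (1 : Matrix p p ℝ)‖ * ‖(1 : Matrix n n ℝ) ⊗ₖ B‖ :=
          hfac ▸ Matrix.l2_opNorm_mul _ _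
      _ ≤ ‖A‖ * ‖B‖ := mul_le_mul (kron_one_norm_le A) (one_kron_norm_le B)
          (norm_nonneg _) (norm_nonneg _)
  · set c := ‖A ⊗ₖ B‖ with hc
    have hc0 : 0 ≤ c := norm_nonneg _
    have key : ∀ (u : n → ℝ) (w : q → ℝ),
        ‖ev (A *ᵥ u)‖ * ‖ev (B *ᵥ w)‖ ≤ c * (‖ev u‖ * ‖ev w‖) := by
      intro u w
      have h1 : ‖ev ((A ⊗ₖ B) *ᵥ tv u w)‖ ≤ c * ‖ev (tv u w)‖ := l2norm_mulVec _ _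
      rwa [kron_mulVec_tv, tv_norm, tv_norm] at h1
    have step1 : ∀ w : q → ℝ, ‖A‖ * ‖ev (B *ᵥ w)‖ ≤ c * ‖ev w‖ := by
      intro w
      rcases eq_or_lt_of_le (norm_nonneg (ev (B *ᵥ w))) with h0 | hpos
      · rw [← h0, mul_zero]
        exact mul_nonneg hc0 (norm_nonneg _)
      · rw [← le_div_iff₀ hpos]
        refine l2norm_le_of_mulVec (by positivity) fun u => ?_
        rw [div_mul_eq_mul_div, le_div_iff₀ hpos]
        calc ‖ev (A *ᵥ u)‖ * ‖ev (B *ᵥ w)‖ ≤ c * (‖ev u‖ * ‖ev w‖) := key u w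
          _ = c * ‖ev w‖ * ‖ev u‖ := by ring
    rcases eq_or_lt_of_le (norm_nonneg A) with hA0 | hApos
    · rw [← hA0, zero_mul]; exact hc0
    · have hB : ‖B‖ ≤ c / ‖A‖ := by
        refine l2norm_le_of_mulVec (by positivity) fun w => ?_
        rw [div_mul_eq_mul_div, le_div_iff₀ hApos]
        calc ‖ev (B *ᵥ w)‖ * ‖A‖ = ‖A‖ * ‖ev (B *ᵥ w)‖ := by ring
          _ ≤ c * ‖ev w‖ := step1 w
      calc ‖A‖ * ‖B‖ ≤ ‖A‖ * (c / ‖A‖) := by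
            exact mul_le_mul_of_nonneg_left hB (norm_nonneg _)
        _ = c := by field_simp

lemma real_iSup_sum {α β : Type*} [Finite α] [Finite β] [Nonempty α] [Nonempty β]
    (h : α ⊕ β → ℝ) : (⨆ i, h i) = max (⨆ a, h (Sum.inl a)) (⨆ b, h (Sum.inr b)) := by
  apply le_antisymm
  · refine ciSup_le fun i => ?_
    cases i with
    | inl a =>
        exact le_max_of_le_left
          (le_ciSup (f := fun a => h (Sum.inl a)) (Set.Finite.bddAbove (Set.finite_range _)) a)
    | inr b =>
        exact le_max_of_le_right
          (le_ciSup (f := fun b => h (Sum.inr b)) (Set.Finite.bddAbove (Set.finite_range _)) b)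
  · exact max_le
      (ciSup_le fun a => le_ciSup (f := h) (Set.Finite.bddAbove (Set.finite_range _)) (Sum.inl a))
      (ciSup_le fun b => le_ciSup (f := h) (Set.Finite.bddAbove (Set.finite_range _)) (Sum.inr b))

lemma div_max_eq_min {a b sf sg : ℝ} (ha : 0 ≤ a) (hb : 0 ≤ b) (hsf : 0 ≤ sf) (hsg : 0 ≤ sg)
    (hfa : sf = 0 → a = 0) (hgb : sg = 0 → b = 0) :
    a * b / max (sf * b) (a * sg) = min (a / sf) (b / sg) := by
  rcases eq_or_lt_of_le hsf with h1 | h1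
  · obtain rfl : sf = 0 := h1.symm
    obtain rfl : a = 0 := hfa rfl
    simp [min_eq_left (div_nonneg hb hsg)]
  rcases eq_or_lt_of_le hsg with h2 | h2
  · obtain rfl : sg = 0 := h2.symm
    obtain rfl : b = 0 := hgb rfl
    simp [min_eq_right (div_nonneg ha hsf)]
  rcases le_total (a * sg) (b * sf) with h | h
  · rw [max_eq_left (by rw [mul_comm sf b]; exact h),
      min_eq_left ((div_le_div_iff₀ h1 h2).mpr h)]
    rcases eq_or_lt_of_le hb with hb0 | hb0
    · obtain rfl : b = 0 := hb0.symm
      have ha0 : a = 0 := by nlinarith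
      simp [ha0]
    · rw [mul_comm a b, mul_comm sf b, mul_div_mul_left _ _ (ne_of_gt hb0)]
  · rw [max_eq_right (by rw [mul_comm sf b]; exact h),
      min_eq_right ((div_le_div_iff₀ h2 h1).mpr h)]
    rcases eq_or_lt_of_le ha with ha0 | ha0
    · obtain rfl : a = 0 := ha0.symm
      have hb0 : b = 0 := by nlinarith
      simp [hb0]
    · rw [mul_div_mul_left _ _ (ne_of_gt ha0)]

lemma specNorm_kron (A : Matrix m n ℝ) (B : Matrix p q ℝ) :
    specNorm (A ⊗ₖ B) = specNorm A * specNorm B := by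
  rw [specNorm_eq, specNorm_eq, specNorm_eq, kron_norm_eq]

end CorAux

variable {nf ng : ℕ}

/-- `advZero Γ i` zeroes out all entries `Γ[x,y]` with `x i = y i`. -/
def advZero {P Q : (Fin nf → Bool) → Prop}
    (Γ : Matrix {x // P x} {x // Q x} ℝ) (i : Fin nf) :
    Matrix {x // P x} {x // Q x} ℝ :=
  fun x y => if x.1 i = y.1 i then 0 else Γ x y

/-- The Kronecker product of adversary matrices, as a matrix indexed by pairs. -/
def corKron {Pf Qf : (Fin nf → Bool) → Prop} {Pg Qg : (Fin ng → Bool) → Prop}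
    (Γf : Matrix {x // Pf x} {x // Qf x} ℝ) (Γg : Matrix {y // Pg y} {y // Qg y} ℝ) :
    Matrix ({x // Pf x} × {y // Pg y}) ({x // Qf x} × {y // Qg y}) ℝ :=
  fun a b => Γf a.1 b.1 * Γg a.2 b.2

/-- Zeroing out entries of a matrix for `COR(f,g)` at an index of the combined input
(an index of the `f`-component or of the `g`-component). -/
def corZero {Pf Qf : (Fin nf → Bool) → Prop} {Pg Qg : (Fin ng → Bool) → Prop}
    (Γ : Matrix ({x // Pf x} × {y // Pg y}) ({x // Qf x} × {y // Qg y}) ℝ)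
    (i : Fin nf ⊕ Fin ng) :
    Matrix ({x // Pf x} × {y // Pg y}) ({x // Qf x} × {y // Qg y}) ℝ :=
  fun a b =>
    match i with
    | Sum.inl i => if a.1.1 i = b.1.1 i then 0 else Γ a b
    | Sum.inr i => if a.2.1 i = b.2.1 i then 0 else Γ a b

/-- For partial Boolean functions `f` (on `n_f` bits, with 0-inputs
`X₀ = f⁻¹(false)` and 1-inputs `X₁ = f⁻¹(true)`) and `g` (on `n_g` bits, 0-inputs `Y₀`,
1-inputs `Y₁`), and adversary matrices `Γ^f : ℝ^{X₀×X₁}`, `Γ^g : ℝ^{Y₀×Y₁}`,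
the Kronecker product `Γ = Γ^f ⊗ Γ^g` (rows `X₀×Y₀`, columns `X₁×Y₁`) is an adversary
matrix for `COR(f,g)` whose zeroed-out versions satisfy `Γ_i = Γ^f_i ⊗ Γ^g` for `i` in
the `f`-component and `Γ_i = Γ^f ⊗ Γ^g_i` for `i` in the `g`-component; consequently
`‖Γ‖ / maxᵢ ‖Γᵢ‖ = min(‖Γ^f‖ / maxᵢ ‖Γ^f_i‖, ‖Γ^g‖ / maxᵢ ‖Γ^g_i‖)`. -/
theorem cor_kronecker_adversary [NeZero nf] [NeZero ng]
    (f : (Fin nf → Bool) → Bool) (g : (Fin ng → Bool) → Bool)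
    (Γf : Matrix {x // f x = false} {x // f x = true} ℝ)
    (Γg : Matrix {y // g y = false} {y // g y = true} ℝ) :
    (∀ i : Fin nf, corZero (corKron Γf Γg) (Sum.inl i) = corKron (advZero Γf i) Γg) ∧
    (∀ i : Fin ng, corZero (corKron Γf Γg) (Sum.inr i) = corKron Γf (advZero Γg i)) ∧
    specNorm (corKron Γf Γg) / (⨆ i : Fin nf ⊕ Fin ng, specNorm (corZero (corKron Γf Γg) i)) =
      min (specNorm Γf / ⨆ i : Fin nf, specNorm (advZero Γf i))
        (specNorm Γg / ⨆ i : Fin ng, specNorm (advZero Γg i)) := by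
  haveI : Nonempty (Fin nf) := ⟨⟨0, Nat.pos_of_ne_zero (NeZero.ne nf)⟩⟩
  haveI : Nonempty (Fin ng) := ⟨⟨0, Nat.pos_of_ne_zero (NeZero.ne ng)⟩⟩
  have part1 : ∀ i : Fin nf,
      corZero (corKron Γf Γg) (Sum.inl i) = corKron (advZero Γf i) Γg := by
    intro i; funext a b
    simp only [corZero, corKron, advZero]
    split_ifs <;> simp
  have part2 : ∀ i : Fin ng,
      corZero (corKron Γf Γg) (Sum.inr i) = corKron Γf (advZero Γg i) := by
    intro i; funext a b
    simp only [corZero, corKron, advZero]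
    split_ifs <;> simp
  refine ⟨part1, part2, ?_⟩
  have hkron : ∀ (A : Matrix {x // f x = false} {x // f x = true} ℝ)
      (B : Matrix {y // g y = false} {y // g y = true} ℝ),
      specNorm (corKron A B) = specNorm A * specNorm B := fun A B => specNorm_kron A B
  set a := specNorm Γf with ha
  set b := specNorm Γg with hb
  set Sf := ⨆ i : Fin nf, specNorm (advZero Γf i) with hSf
  set Sg := ⨆ i : Fin ng, specNorm (advZero Γg i) with hSg
  have ha0 : 0 ≤ a := specNorm_nonneg _
  have hb0 : 0 ≤ b := specNorm_nonneg _
  have hSf0 : 0 ≤ Sf := le_trans (specNorm_nonneg (advZero Γf (Classical.arbitrary _)))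
    (le_ciSup (f := fun i => specNorm (advZero Γf i))
      (Set.Finite.bddAbove (Set.finite_range _)) _)
  have hSg0 : 0 ≤ Sg := le_trans (specNorm_nonneg (advZero Γg (Classical.arbitrary _)))
    (le_ciSup (f := fun i => specNorm (advZero Γg i))
      (Set.Finite.bddAbove (Set.finite_range _)) _)
  have hzf : Sf = 0 → a = 0 := by
    intro h
    have hadv : ∀ i, advZero Γf i = 0 := by
      intro i
      have h1 : specNorm (advZero Γf i) ≤ Sf :=
        le_ciSup (f := fun i => specNorm (advZero Γf i))
          (Set.Finite.bddAbove (Set.finite_range _)) i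
      exact (specNorm_eq_zero_iff _).mp
        (le_antisymm (h ▸ h1) (specNorm_nonneg _))
    have hzero : Γf = 0 := by
      funext x y
      have hne : x.1 ≠ y.1 := by
        intro hxy
        have h2 := x.2
        rw [hxy, y.2] at h2
        exact absurd h2 (by simp)
      obtain ⟨i, hi⟩ := Function.ne_iff.mp hne
      have h3 := congrFun (congrFun (hadv i) x) y
      rw [show advZero Γf i x y = Γf x y from if_neg hi] at h3
      exact h3
    rw [ha, hzero, (specNorm_eq_zero_iff _).mpr rfl]
  have hzg : Sg = 0 → b = 0 := by
    intro h
    have hadv : ∀ i, advZero Γg i = 0 := by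
      intro i
      have h1 : specNorm (advZero Γg i) ≤ Sg :=
        le_ciSup (f := fun i => specNorm (advZero Γg i))
          (Set.Finite.bddAbove (Set.finite_range _)) i
      exact (specNorm_eq_zero_iff _).mp
        (le_antisymm (h ▸ h1) (specNorm_nonneg _))
    have hzero : Γg = 0 := by
      funext x y
      have hne : x.1 ≠ y.1 := by
        intro hxy
        have h2 := x.2
        rw [hxy, y.2] at h2
        exact absurd h2 (by simp)
      obtain ⟨i, hi⟩ := Function.ne_iff.mp hne
      have h3 := congrFun (congrFun (hadv i) x) y
      rw [show advZero Γg i x y = Γg x y from if_neg hi] at h3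
      exact h3
    rw [hb, hzero, (specNorm_eq_zero_iff _).mpr rfl]
  have hnum : specNorm (corKron Γf Γg) = a * b := hkron Γf Γg
  have hden : (⨆ i : Fin nf ⊕ Fin ng, specNorm (corZero (corKron Γf Γg) i))
      = max (Sf * b) (a * Sg) := by
    rw [real_iSup_sum]
    congr 1
    · calc (⨆ i : Fin nf, specNorm (corZero (corKron Γf Γg) (Sum.inl i)))
          = ⨆ i : Fin nf, specNorm (advZero Γf i) * b := by
            refine iSup_congr fun i => ?_
            rw [part1 i, hkron]
        _ = Sf * b := (Real.iSup_mul_of_nonneg hb0 _).symm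
    · calc (⨆ i : Fin ng, specNorm (corZero (corKron Γf Γg) (Sum.inr i)))
          = ⨆ i : Fin ng, a * specNorm (advZero Γg i) := by
            refine iSup_congr fun i => ?_
            rw [part2 i, hkron]
        _ = a * Sg := (Real.mul_iSup_of_nonneg ha0 _).symm
  rw [hnum, hden]
  exact div_max_eq_min ha0 hb0 hSf0 hSg0 hzf hzg
end

section
/- Let f : {0,1}^N → {0,1} be a total Boolean function. Then the parallel combinatorial adversary bound satisfies Alb_{p∥}(f) ≤ sqrt( ⌈C_0(f)/p⌉ · ⌈C_1(f)/p⌉ ), where C_0(f) and C_1(f) are the 0-certificate and 1-certificate complexities of f. -/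
open Finset

variable {N : ℕ}

/-- `S` is a certificate for `f` on input `x`: every `y` agreeing with `x` on `S`
has `f y = f x`. -/
def IsCert (f : (Fin N → Bool) → Bool) (x : Fin N → Bool) (S : Finset (Fin N)) : Prop :=
  ∀ y : Fin N → Bool, (∀ i ∈ S, y i = x i) → f y = f x

/-- The certificate complexity of `f` at `x`: the least size of a certificate. -/
noncomputable def certAt (f : (Fin N → Bool) → Bool) (x : Fin N → Bool) : ℕ :=
  sInf {k | ∃ S : Finset (Fin N), S.card = k ∧ IsCert f x S}

/-- `certC f b` : the `b`-certificate complexity of `f`, the maximum of `certAt f x`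
over inputs `x` with `f x = b`. -/
noncomputable def certC (f : (Fin N → Bool) → Bool) (b : Bool) : ℕ :=
  sSup {k | ∃ x, f x = b ∧ certAt f x = k}

lemma univ_isCert (f : (Fin N → Bool) → Bool) (x : Fin N → Bool) :
    IsCert f x Finset.univ := by
  intro y hy
  have : y = x := funext fun i => hy i (Finset.mem_univ i)
  rw [this]

lemma certAt_spec (f : (Fin N → Bool) → Bool) (x : Fin N → Bool) :
    ∃ S : Finset (Fin N), S.card = certAt f x ∧ IsCert f x S := by
  have hne : {k | ∃ S : Finset (Fin N), S.card = k ∧ IsCert f x S}.Nonempty :=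
    ⟨N, Finset.univ, Finset.card_fin N, univ_isCert f x⟩
  exact Nat.sInf_mem hne

lemma certAt_le_certC (f : (Fin N → Bool) → Bool) (x : Fin N → Bool) :
    certAt f x ≤ certC f (f x) := by
  apply le_csSup
  · refine ⟨N, ?_⟩
    rintro k ⟨x', _, rfl⟩
    exact Nat.sInf_le ⟨Finset.univ, Finset.card_fin N, univ_isCert f x'⟩
  · exact ⟨x, rfl, rfl⟩

lemma key_count {α : Type*} {N : ℕ} (p ℓ : ℕ) (hp : 0 < p) (D : α → Fin N → Prop)
    [∀ q i, Decidable (D q i)] [DecidableEq α] :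
    ∀ n (S0 : Finset (Fin N)), S0.card = n → ∀ (F : Finset α),
      (∀ q ∈ F, ∃ i ∈ S0, D q i) →
      (∀ S : Finset (Fin N), S.card ≤ p → (F.filter fun q => ∃ i ∈ S, D q i).card ≤ ℓ) →
      F.card ≤ ((S0.card + p - 1) / p) * ℓ := by
  intro n
  induction n using Nat.strong_induction_on with
  | _ n ih =>
    intro S0 hcard F hcov hbound
    rcases Nat.eq_zero_or_pos S0.card with h0 | hpos
    · have : F = ∅ := by
        rw [Finset.card_eq_zero] at h0
        subst h0
        rcases Finset.eq_empty_or_nonempty F with h | ⟨q, hq⟩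
        · exact h
        · obtain ⟨i, hi, _⟩ := hcov q hq
          exact absurd hi (by simp)
      simp [this]
    · by_cases hle : S0.card ≤ p
      · have h1 : F.filter (fun q => ∃ i ∈ S0, D q i) = F :=
          Finset.filter_true_of_mem hcov
      
        have h2 : F.card ≤ ℓ := by
          have := hbound S0 hle; rwa [h1] at this
        have ht : 1 ≤ (S0.card + p - 1) / p := by
          rw [Nat.le_div_iff_mul_le hp]
          omega
        calc F.card ≤ ℓ := h2
          _ ≤ ((S0.card + p - 1) / p) * ℓ := Nat.le_mul_of_pos_left ℓ ht
      · push_neg at hle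
        obtain ⟨S, hSsub, hScard⟩ := Finset.exists_subset_card_eq (s := S0) (n := p) (le_of_lt hle)
        set F2 := F.filter (fun q => ¬ ∃ i ∈ S, D q i) with hF2
        have h2 : ∀ q ∈ F2, ∃ i ∈ S0 \ S, D q i := by
          intro q hq
          rw [hF2, Finset.mem_filter] at hq
          obtain ⟨hqF, hqn⟩ := hq
          obtain ⟨i, hi, hDi⟩ := hcov q hqF
          refine ⟨i, Finset.mem_sdiff.2 ⟨hi, fun hiS => hqn ⟨i, hiS, hDi⟩⟩, hDi⟩
        have hb2 : ∀ S' : Finset (Fin N), S'.card ≤ p →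
            (F2.filter fun q => ∃ i ∈ S', D q i).card ≤ ℓ := by
          intro S' h
          exact le_trans (Finset.card_le_card
            (Finset.filter_subset_filter _ (Finset.filter_subset _ _))) (hbound S' h)
        have hcd : (S0 \ S).card = S0.card - p := by
          rw [Finset.card_sdiff_of_subset hSsub, hScard]
        have hlt : (S0 \ S).card < n := by omega
        have hrec := ih _ hlt (S0 \ S) rfl F2 h2 hb2
        have hsplit : F.card = (F.filter (fun q => ∃ i ∈ S, D q i)).card + F2.card := by
          rw [hF2]
          exact (Finset.card_filter_add_card_filter_not _).symm
        have hb1 : (F.filter (fun q => ∃ i ∈ S, D q i)).card ≤ ℓ := by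
          apply hbound; omega
        have harith : ((S0 \ S).card + p - 1) / p + 1 = (S0.card + p - 1) / p := by
          rw [hcd]
          have h1 : S0.card - p + p - 1 = S0.card - 1 := by omega
          have h2 : S0.card + p - 1 = (S0.card - 1) + p := by omega
          rw [h1, h2, Nat.add_div_right _ hp]
        calc F.card = (F.filter (fun q => ∃ i ∈ S, D q i)).card + F2.card := hsplit
          _ ≤ ℓ + ((S0 \ S).card + p - 1) / p * ℓ := Nat.add_le_add hb1 hrec
          _ = (((S0 \ S).card + p - 1) / p + 1) * ℓ := by ring
          _ = ((S0.card + p - 1) / p) * ℓ := by rw [harith]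

lemma side_bound {α : Type*} [DecidableEq α] (p ℓ : ℕ) (hp : 0 < p)
    (f : (Fin N → Bool) → Bool) (z : Fin N → Bool)
    (F : Finset α) (g : α → (Fin N → Bool))
    (hg : ∀ q ∈ F, f (g q) ≠ f z)
    (hbound : ∀ S : Finset (Fin N), S.card ≤ p →
        (F.filter fun q => ∃ i ∈ S, g q i ≠ z i).card ≤ ℓ) :
    F.card ≤ ((certAt f z + p - 1) / p) * ℓ := by
  obtain ⟨S0, hS0card, hS0cert⟩ := certAt_spec f z
  have hcov : ∀ q ∈ F, ∃ i ∈ S0, g q i ≠ z i := by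
    intro q hq
    by_contra h
    push_neg at h
    exact hg q hq (hS0cert (g q) h)
  rw [← hS0card]
  exact key_count p ℓ hp (fun q i => g q i ≠ z i) S0.card S0 rfl F hcov hbound

/-- **certificate barrier for the parallel combinatorial adversary.**
For any total `f`, any sets `X ⊆ f⁻¹(0)`, `Y ⊆ f⁻¹(1)` and relation `R ⊆ X × Y`, the
parallel combinatorial adversary quantity `sqrt((m·m')/(ℓ·ℓ'))` is at most
`sqrt(⌈C₀(f)/p⌉·⌈C₁(f)/p⌉)`.  Here `w_x, w_y` count the pairs of `R` through `x`
resp. `y`; for `S ⊆ [N]` with `|S| ≤ p`, `w_{x,S}, w_{y,S}` count those pairs that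
additionally differ on `S`; `m = min_x w_x`, `ℓ = max_{x,S} w_{x,S}`,
`m' = min_y w_y`, `ℓ' = max_{y,S} w_{y,S}`. -/
theorem parallel_comb_adv_barrier (p : ℕ) (hp : 0 < p)
    (f : (Fin N → Bool) → Bool)
    (X Y : Finset (Fin N → Bool)) (hX : X.Nonempty) (hY : Y.Nonempty)
    (hX0 : ∀ x ∈ X, f x = false) (hY1 : ∀ y ∈ Y, f y = true)
    (R : Finset ((Fin N → Bool) × (Fin N → Bool))) (hR : R ⊆ X ×ˢ Y) :
    Real.sqrt
        (((X.inf' hX fun x => (R.filter fun q => q.1 = x).card) *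
            (Y.inf' hY fun y => (R.filter fun q => q.2 = y).card) : ℕ) /
          ((sSup {k | ∃ x ∈ X, ∃ S : Finset (Fin N), S.card ≤ p ∧
                (R.filter fun q => q.1 = x ∧ ∃ i ∈ S, q.1 i ≠ q.2 i).card = k}) *
            (sSup {k | ∃ y ∈ Y, ∃ S : Finset (Fin N), S.card ≤ p ∧
                (R.filter fun q => q.2 = y ∧ ∃ i ∈ S, q.1 i ≠ q.2 i).card = k}) : ℕ)) ≤
      Real.sqrt
        ((((certC f false + p - 1) / p) * ((certC f true + p - 1) / p) : ℕ)) := by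
  set m1 := X.inf' hX fun x => (R.filter fun q => q.1 = x).card with hm1
  set m2 := Y.inf' hY fun y => (R.filter fun q => q.2 = y).card with hm2
  set L1 := sSup {k | ∃ x ∈ X, ∃ S : Finset (Fin N), S.card ≤ p ∧
      (R.filter fun q => q.1 = x ∧ ∃ i ∈ S, q.1 i ≠ q.2 i).card = k} with hL1
  set L2 := sSup {k | ∃ y ∈ Y, ∃ S : Finset (Fin N), S.card ≤ p ∧
      (R.filter fun q => q.2 = y ∧ ∃ i ∈ S, q.1 i ≠ q.2 i).card = k} with hL2
  set c0 := (certC f false + p - 1) / p with hc0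
  set c1 := (certC f true + p - 1) / p with hc1
  apply Real.sqrt_le_sqrt
  rcases Nat.eq_zero_or_pos (L1 * L2) with hB | hB
  · rw [hB]
    simp only [Nat.cast_zero, div_zero]
    positivity
  · rw [div_le_iff₀ (by exact_mod_cast hB)]
    -- main bounds
    have bdd1 : BddAbove {k | ∃ x ∈ X, ∃ S : Finset (Fin N), S.card ≤ p ∧
        (R.filter fun q => q.1 = x ∧ ∃ i ∈ S, q.1 i ≠ q.2 i).card = k} := by
      refine ⟨R.card, ?_⟩
      rintro k ⟨x, _, S, _, rfl⟩
      exact Finset.card_le_card (Finset.filter_subset _ _)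
    have bdd2 : BddAbove {k | ∃ y ∈ Y, ∃ S : Finset (Fin N), S.card ≤ p ∧
        (R.filter fun q => q.2 = y ∧ ∃ i ∈ S, q.1 i ≠ q.2 i).card = k} := by
      refine ⟨R.card, ?_⟩
      rintro k ⟨y, _, S, _, rfl⟩
      exact Finset.card_le_card (Finset.filter_subset _ _)
    obtain ⟨x0, hx0⟩ := hX
    obtain ⟨y0, hy0⟩ := hY
    have key1 : m1 ≤ c0 * L1 := by
      refine le_trans (Finset.inf'_le _ hx0) ?_
      have hside : (R.filter fun q => q.1 = x0).card ≤ ((certAt f x0 + p - 1) / p) * L1 := by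
        apply side_bound p L1 hp f x0 _ Prod.snd
        · intro q hq
          have hq' := Finset.mem_filter.1 hq
          have hmem := Finset.mem_product.1 (hR hq'.1)
          rw [hY1 q.2 hmem.2, hX0 x0 hx0]
          simp
        · intro S hS
          have heq : ((R.filter fun q => q.1 = x0).filter fun q => ∃ i ∈ S, q.2 i ≠ x0 i)
              = R.filter fun q => q.1 = x0 ∧ ∃ i ∈ S, q.1 i ≠ q.2 i := by
            rw [Finset.filter_filter]
            apply Finset.filter_congr
            intro q _
            constructor
            · rintro ⟨h1, i, hi, h2⟩
              exact ⟨h1, i, hi, by rw [h1]; exact fun h => h2 h.symm⟩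
            · rintro ⟨h1, i, hi, h2⟩
              exact ⟨h1, i, hi, by rw [← h1]; exact fun h => h2 h.symm⟩
          rw [heq]
          exact le_csSup bdd1 ⟨x0, hx0, S, hS, rfl⟩
      refine le_trans hside (Nat.mul_le_mul_right _ ?_)
      apply Nat.div_le_div_right
      have := certAt_le_certC f x0
      rw [hX0 x0 hx0] at this
      omega
    have key2 : m2 ≤ c1 * L2 := by
      refine le_trans (Finset.inf'_le _ hy0) ?_
      have hside : (R.filter fun q => q.2 = y0).card ≤ ((certAt f y0 + p - 1) / p) * L2 := by
        apply side_bound p L2 hp f y0 _ Prod.fst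
        · intro q hq
          have hq' := Finset.mem_filter.1 hq
          have hmem := Finset.mem_product.1 (hR hq'.1)
          rw [hX0 q.1 hmem.1, hY1 y0 hy0]
          simp
        · intro S hS
          have heq : ((R.filter fun q => q.2 = y0).filter fun q => ∃ i ∈ S, q.1 i ≠ y0 i)
              = R.filter fun q => q.2 = y0 ∧ ∃ i ∈ S, q.1 i ≠ q.2 i := by
            rw [Finset.filter_filter]
            apply Finset.filter_congr
            intro q _
            constructor
            · rintro ⟨h1, i, hi, h2⟩
              exact ⟨h1, i, hi, by rw [h1]; exact h2⟩
            · rintro ⟨h1, i, hi, h2⟩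
              exact ⟨h1, i, hi, by rw [h1] at h2; exact h2⟩
          rw [heq]
          exact le_csSup bdd2 ⟨y0, hy0, S, hS, rfl⟩
      refine le_trans hside (Nat.mul_le_mul_right _ ?_)
      apply Nat.div_le_div_right
      have := certAt_le_certC f y0
      rw [hY1 y0 hy0] at this
      omega
    have : m1 * m2 ≤ (c0 * c1) * (L1 * L2) := by
      calc m1 * m2 ≤ (c0 * L1) * (c1 * L2) := Nat.mul_le_mul key1 key2
        _ = (c0 * c1) * (L1 * L2) := by ring
    exact_mod_cast this
end

section
/- Let f : D → {0,1} with D ⊆ [M]^N be a partial function and let f_cs be its cheat-sheet version with c = 10·log N copies (cheat sheets indexed by ℓ ∈ {0,1}^c, with an all-zero cheat sheet forcing output 0). Then the p-parallel deterministic query complexity of f_cs is at least that of f: D^{p∥}(f_cs) ≥ D^{p∥}(f), provided p·D^{p∥}(f) ≤ N and 2^c > p·D^{p∥}(f). -/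
namespace CSAux

open QAlg

variable {ι α : Type*}

/-- Decode the value at index `i` from a history list. -/
noncomputable def dec [DecidableEq ι] [Inhabited α] (L : List (ι × α)) (i : ι) : α :=
  (((L.find? (fun pr => decide (pr.1 = i))).map Prod.snd).getD default)

lemma dec_spec [DecidableEq ι] [Inhabited α] (x : ι → α) (L : List (ι × α))
    (hL : ∀ pr ∈ L, pr.2 = x pr.1) (i : ι) (hi : ∃ pr ∈ L, pr.1 = i) :
    dec L i = x i := by
  have hs : (L.find? (fun pr => decide (pr.1 = i))).isSome := by
    rw [List.find?_isSome]
    obtain ⟨pr, hm, he⟩ := hi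
    exact ⟨pr, hm, by simp [he]⟩
  obtain ⟨pr, hpr⟩ := Option.isSome_iff_exists.mp hs
  have h1 : pr.1 = i := by simpa using List.find?_some hpr
  have h2 := hL pr (List.mem_of_find?_eq_some hpr)
  simp [dec, hpr, h2, h1]

lemma hist_succ (A : QAlg ι α) (z : ι → α) (k : ℕ) :
    A.hist z (k+1) = A.hist z k ++ ((A.query (A.hist z k)).toList.map fun i => (i, z i)) := rfl

lemma hist_congr (A : QAlg ι α) (z z' : ι → α) (k : ℕ)
    (h : ∀ j < k, ∀ i ∈ A.query (A.hist z j), z' i = z i) :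
    A.hist z' k = A.hist z k := by
  induction k with
  | zero => rfl
  | succ k ih =>
    have hk := ih (fun j hj => h j (Nat.lt_succ_of_lt hj))
    rw [hist_succ, hist_succ, hk]
    congr 1
    refine List.map_congr_left fun i hi => ?_
    rw [h k (Nat.lt_succ_self k) i (Finset.mem_toList.mp hi)]

lemma hist_length_le (A : QAlg ι α) {p : ℕ} (hA : A.Parallel p) (z : ι → α) (k : ℕ) :
    (A.hist z k).length ≤ p * k := by
  induction k with
  | zero => simp [QAlg.hist]
  | succ k ih =>
    rw [hist_succ]
    simp only [List.length_append, List.length_map, Finset.length_toList]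
    calc (A.hist z k).length + (A.query (A.hist z k)).card ≤ p * k + p :=
          Nat.add_le_add ih (hA _)
      _ = p * (k+1) := by ring

lemma mem_hist_of_query (A : QAlg ι α) (z : ι → α) {j k : ℕ} (hjk : j < k)
    {i : ι} (hi : i ∈ A.query (A.hist z j)) : (i, z i) ∈ A.hist z k := by
  induction k with
  | zero => omega
  | succ k ih =>
    rw [hist_succ]
    rcases Nat.lt_succ_iff_lt_or_eq.mp hjk with h | h
    · exact List.mem_append_left _ (ih h)
    · subst h
      exact List.mem_append_right _ (List.mem_map.mpr ⟨i, Finset.mem_toList.mpr hi, rfl⟩)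

/-- A trivial "query everything one at a time" algorithm, for nonemptiness. -/
lemma exists_full_alg [Fintype ι] [DecidableEq ι] [Inhabited α] {p : ℕ} (hp : 0 < p)
    (F : (ι → α) → Bool) :
    ∃ (t : ℕ) (A : QAlg ι α), A.Parallel p ∧ A.Computes Set.univ F t := by
  classical
  set e := (Finset.univ : Finset ι).toList with he
  set K := e.length with hK
  refine ⟨K, ⟨fun h => ((e.drop h.length).take 1).toFinset,
      fun h => F (fun i => dec h i)⟩, ?_, ?_⟩
  · intro h
    calc ((e.drop h.length).take 1).toFinset.card ≤ ((e.drop h.length).take 1).length :=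
          List.toFinset_card_le _
      _ ≤ 1 := List.length_take_le _ _
      _ ≤ p := hp
  · intro z _
    have key : ∀ k, QAlg.hist ⟨fun h => ((e.drop h.length).take 1).toFinset,
        fun h => F (fun i => dec h i)⟩ z k = (e.map (fun i => (i, z i))).take k := by
      intro k
      set E := e.map (fun i => (i, z i)) with hE
      have hEK : E.length = K := by simp [hE, hK]
      induction k with
      | zero => simp [QAlg.hist]
      | succ k ih =>
        rw [hist_succ, ih]
        have hlen : (E.take k).length = min k K := by simp [hEK]
        by_cases hk : k < K
        · have hdrop : e.drop (E.take k).length = e[k] :: e.drop (k+1) := by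
            rw [hlen, Nat.min_eq_left hk.le]; exact List.drop_eq_getElem_cons hk
          have hq : (((e.drop (E.take k).length).take 1).toFinset).toList = [e[k]] := by
            rw [hdrop]
            show ([e[k]] : List ι).toFinset.toList = [e[k]]
            simp
          show E.take k ++ (((e.drop (E.take k).length).take 1).toFinset).toList.map
              (fun i => (i, z i)) = E.take (k+1)
          rw [hq]
          have hkE : k < E.length := by rw [hEK]; exact hk
          have hEk : E[k] = (e[k], z e[k]) := by simp [hE]
          rw [List.take_succ, List.getElem?_eq_getElem hkE, hEk]
          rfl
        · have hdrop : e.drop (E.take k).length = [] := by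
            rw [hlen, Nat.min_eq_right (le_of_not_gt hk)]; exact List.drop_length (l := e)
          show E.take k ++ (((e.drop (E.take k).length).take 1).toFinset).toList.map
              (fun i => (i, z i)) = E.take (k+1)
          rw [hdrop]
          have h1 : E.take k = E := List.take_of_length_le (by omega)
          have h2 : E.take (k+1) = E := List.take_of_length_le (by omega)
          simp [h1, h2]
    show F _ = F z
    congr 1
    funext i
    rw [key K]
    have : (e.map (fun i => (i, z i))).take K = e.map (fun i => (i, z i)) :=
      List.take_of_length_le (by simp [hK])
    rw [this]
    refine dec_spec z _ ?_ i ?_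
    · intro pr hpr
      obtain ⟨i', _, rfl⟩ := List.mem_map.mp hpr
      rfl
    · exact ⟨(i, z i), List.mem_map.mpr ⟨i, by simp [he], rfl⟩, rfl⟩


section Game

variable {N M : ℕ}

/-- `x` extends the partial assignment `ρ`. -/
def Ext (ρ : Fin N → Option (Fin M)) (x : Fin N → Fin M) : Prop :=
  ∀ j v, ρ j = some v → x j = v

/-- Update a partial assignment with answers `a` on the query set `Q`
(previously assigned positions are kept). -/
def updP (ρ : Fin N → Option (Fin M)) (Q : Finset (Fin N)) (a : Fin N → Fin M) :
    Fin N → Option (Fin M) :=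
  fun j => (ρ j).elim (if j ∈ Q then some (a j) else none) some

lemma updP_some {ρ : Fin N → Option (Fin M)} {Q : Finset (Fin N)} {a : Fin N → Fin M}
    {j : Fin N} {v : Fin M} :
    updP ρ Q a j = some v ↔ ρ j = some v ∨ (ρ j = none ∧ j ∈ Q ∧ v = a j) := by
  cases h : ρ j <;> simp [updP, h] <;> by_cases hj : j ∈ Q <;> simp [hj, eq_comm]

lemma updP_mono {ρ : Fin N → Option (Fin M)} {Q Q' : Finset (Fin N)} (hQ : Q ⊆ Q')
    (a : Fin N → Fin M) {j : Fin N} {v : Fin M} (h : updP ρ Q a j = some v) :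
    updP ρ Q' a j = some v := by
  rw [updP_some] at h ⊢
  rcases h with h | ⟨h1, h2, h3⟩
  · exact Or.inl h
  · exact Or.inr ⟨h1, hQ h2, h3⟩

lemma updP_extends {ρ : Fin N → Option (Fin M)} {Q : Finset (Fin N)} {a : Fin N → Fin M}
    {j : Fin N} {v : Fin M} (h : ρ j = some v) : updP ρ Q a j = some v :=
  updP_some.mpr (Or.inl h)

lemma updP_isSome {ρ : Fin N → Option (Fin M)} {Q : Finset (Fin N)} {a : Fin N → Fin M}
    {j : Fin N} (h : j ∈ Q) : (updP ρ Q a j).isSome := by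
  cases hj : ρ j <;> simp [updP, hj, h]

/-- `f` restricted to extensions of `ρ` in `D` can be computed by a `p`-parallel
algorithm in `s` rounds. -/
def Solvable (p : ℕ) (D : Set (Fin N → Fin M)) (f : (Fin N → Fin M) → Bool) (s : ℕ)
    (ρ : Fin N → Option (Fin M)) : Prop :=
  ∃ B : QAlg (Fin N) (Fin M), B.Parallel p ∧
    ∀ x, x ∈ D → Ext ρ x → B.out (B.hist x s) = f x

lemma solvable_mono {p : ℕ} {D : Set (Fin N → Fin M)} {f : (Fin N → Fin M) → Bool} {s : ℕ}
    {ρ ρ' : Fin N → Option (Fin M)} (hρ : ∀ j v, ρ j = some v → ρ' j = some v) :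
    Solvable p D f s ρ → Solvable p D f s ρ' := by
  rintro ⟨B, h1, h2⟩
  exact ⟨B, h1, fun x hx hext => h2 x hx (fun j v hv => hext j v (hρ j v hv))⟩

lemma solvable_step {p : ℕ} [NeZero M] (hp : 0 < p) (hN : 0 < N)
    {D : Set (Fin N → Fin M)} {f : (Fin N → Fin M) → Bool} {s : ℕ}
    {ρ : Fin N → Option (Fin M)} (Q : Finset (Fin N)) (hQ : Q.card ≤ p)
    (h : ∀ a, Solvable p D f s (updP ρ Q a)) : Solvable p D f (s+1) ρ := by
  classical
  obtain ⟨j₀⟩ : Nonempty (Fin N) := ⟨⟨0, hN⟩⟩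
  set Q' : Finset (Fin N) := if Q = ∅ then {j₀} else Q with hQ'
  have hQsub : Q ⊆ Q' := by
    rw [hQ']; split
    · simp_all
    · exact le_refl Q
  have hQ'card : Q'.card ≤ p := by
    rw [hQ']; split
    · simp; exact hp
    · exact hQ
  have hQ'ne : Q'.Nonempty := by
    rw [hQ']; split
    · exact ⟨j₀, Finset.mem_singleton_self j₀⟩
    · exact Finset.nonempty_iff_ne_empty.mpr (by assumption)
  have h' : ∀ a, Solvable p D f s (updP ρ Q' a) := fun a =>
    solvable_mono (fun j v => updP_mono hQsub a) (h a)
  choose Ba hBa1 hBa2 using h'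
  set q := Q'.card with hq
  have hq1 : 1 ≤ q := Finset.card_pos.mpr hQ'ne
  set L1 : (Fin N → Fin M) → List (Fin N × Fin M) :=
    fun x => Q'.toList.map (fun j => (j, x j)) with hL1
  have hL1len : ∀ x, (L1 x).length = q := by intro x; simp [hL1, hq]
  set B : QAlg (Fin N) (Fin M) :=
    ⟨fun h => if h.length < q then Q' else (Ba (dec (h.take q))).query (h.drop q),
     fun h => if h.length < q then true else (Ba (dec (h.take q))).out (h.drop q)⟩ with hB
  have hpar : B.Parallel p := by
    intro h
    show (if h.length < q then Q' else (Ba (dec (h.take q))).query (h.drop q)).card ≤ p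
    split
    · exact hQ'card
    · exact hBa1 _ _
  have sim : ∀ (x : Fin N → Fin M) (k : ℕ),
      B.hist x (k+1) = L1 x ++ (Ba (dec (L1 x))).hist x k := by
    intro x k
    induction k with
    | zero =>
      rw [hist_succ]
      have h0 : B.hist x 0 = [] := rfl
      rw [h0]
      have : B.query [] = Q' := by
        show (if ([] : List (Fin N × Fin M)).length < q then Q' else _) = Q'
        rw [if_pos (by simp; exact hq1)]
      rw [this]
      simp [hL1, QAlg.hist]
    | succ k ih =>
      rw [hist_succ, ih]
      have hnotlt : ¬ (L1 x ++ (Ba (dec (L1 x))).hist x k).length < q := by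
        rw [List.length_append, hL1len]; omega
      have htake : (L1 x ++ (Ba (dec (L1 x))).hist x k).take q = L1 x :=
        List.take_left' (hL1len x)
      have hdrop : (L1 x ++ (Ba (dec (L1 x))).hist x k).drop q = (Ba (dec (L1 x))).hist x k :=
        List.drop_left' (hL1len x)
      have hquery : B.query (L1 x ++ (Ba (dec (L1 x))).hist x k) =
          (Ba (dec (L1 x))).query ((Ba (dec (L1 x))).hist x k) := by
        show (if _ then _ else _) = _
        rw [if_neg hnotlt, htake, hdrop]
      rw [hquery, List.append_assoc]
      rfl
  refine ⟨B, hpar, fun x hx hext => ?_⟩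
  rw [sim x s]
  have hnotlt : ¬ (L1 x ++ (Ba (dec (L1 x))).hist x s).length < q := by
    rw [List.length_append, hL1len]; omega
  have htake : (L1 x ++ (Ba (dec (L1 x))).hist x s).take q = L1 x :=
    List.take_left' (hL1len x)
  have hdrop : (L1 x ++ (Ba (dec (L1 x))).hist x s).drop q = (Ba (dec (L1 x))).hist x s :=
    List.drop_left' (hL1len x)
  have hout : B.out (L1 x ++ (Ba (dec (L1 x))).hist x s) =
      (Ba (dec (L1 x))).out ((Ba (dec (L1 x))).hist x s) := by
    show (if _ then _ else _) = _
    rw [if_neg hnotlt, htake, hdrop]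
  rw [hout]
  refine hBa2 (dec (L1 x)) x hx ?_
  intro j v hv
  rcases updP_some.mp hv with h1 | ⟨h1, h2, h3⟩
  · exact hext j v h1
  · subst h3
    refine (dec_spec x (L1 x) ?_ j ?_).symm
    · intro pr hpr
      obtain ⟨j', _, rfl⟩ := List.mem_map.mp hpr
      rfl
    · exact ⟨(j, x j), List.mem_map.mpr ⟨j, Finset.mem_toList.mpr h2, rfl⟩, rfl⟩

lemma solvable_adv {p : ℕ} [NeZero M] (hp : 0 < p) (hN : 0 < N)
    {D : Set (Fin N → Fin M)} {f : (Fin N → Fin M) → Bool} {s : ℕ}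
    {ρ : Fin N → Option (Fin M)} (h : ¬ Solvable p D f (s+1) ρ)
    (Q : Finset (Fin N)) (hQ : Q.card ≤ p) :
    ∃ a, ¬ Solvable p D f s (updP ρ Q a) := by
  by_contra hc
  push_neg at hc
  exact h (solvable_step hp hN Q hQ hc)

lemma solvable_zero {p : ℕ} {D : Set (Fin N → Fin M)} {f : (Fin N → Fin M) → Bool}
    {ρ : Fin N → Option (Fin M)} (h : ¬ Solvable p D f 0 ρ) (b : Bool) :
    ∃ x, x ∈ D ∧ Ext ρ x ∧ f x = b := by
  by_contra hc
  push_neg at hc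
  refine h ⟨⟨fun _ => ∅, fun _ => !b⟩, fun _ => by simp, fun x hx hext => ?_⟩
  have h2 : f x ≠ b := hc x hx hext
  have h4 : f x = !b := by
    cases b <;> cases hfx : f x <;> simp_all
  show (!b) = f x
  rw [h4]

end Game
end CSAux


section CheatSheet

variable {N M c m : ℕ} [NeZero M]

/-- The index set of the input to the cheat-sheet function: positions in the `c`
copies `x¹,…,x^c ∈ [M]^N`, plus bit positions in the `2^c` cheat sheets `y^ℓ`
(of `m` bits each, indexed by addresses `ℓ ∈ {0,1}^c`). -/
abbrev CSIdx (N M c m : ℕ) := (Fin c × Fin N) ⊕ ((Fin c → Bool) × Fin m)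

/-- Characters of the cheat-sheet input: `[M]`-characters for the copies,
bits for the cheat sheets. -/
abbrev CSChar (M : ℕ) := Fin M ⊕ Bool

/-- Decode the `i`-th copy `x^i ∈ [M]^N` from a cheat-sheet input. -/
def decodeX (z : CSIdx N M c m → CSChar M) (i : Fin c) : Fin N → Fin M :=
  fun j => (z (Sum.inl (i, j))).elim id fun _ => default

/-- Decode the cheat sheet at address `ℓ`. -/
def decodeY (z : CSIdx N M c m → CSChar M) (ℓ : Fin c → Bool) : Fin m → Bool :=
  fun j => (z (Sum.inr (ℓ, j))).elim (fun _ => false) id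

/-- The cheat-sheet function `f_cs` built from `f` and a certification predicate
`Valid ℓ y xs` ("the cheat sheet `y` at address `ℓ` validly certifies that all
`xs i ∈ D` and `f (xs i) = ℓ i`"): output `1` iff all copies are in the domain and
the cheat sheet at the address `ℓ_i = f(x^i)` is valid. -/
def cheatSheetFn (D : Set (Fin N → Fin M)) [DecidablePred (· ∈ D)]
    (f : (Fin N → Fin M) → Bool)
    (Valid : (Fin c → Bool) → (Fin m → Bool) → (Fin c → Fin N → Fin M) → Prop)
    [∀ ℓ y xs, Decidable (Valid ℓ y xs)]
    (z : CSIdx N M c m → CSChar M) : Bool :=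
  if (∀ i, decodeX z i ∈ D) ∧
      Valid (fun i => f (decodeX z i))
        (decodeY z fun i => f (decodeX z i)) (decodeX z)
  then true else false

/-- For a partial `f : D → {0,1}` (`D ⊆ [M]^N`) and its cheat-sheet
version `f_cs` (with a sound and complete certification predicate, and the all-zero
cheat sheet always invalid), the `p`-parallel deterministic query complexity of
`f_cs` is at least that of `f`, provided `p·D^{p∥}(f) ≤ N` and `2^c > p·D^{p∥}(f)`. -/
theorem cheatsheet_det_parallel_lower_bound
    (D : Set (Fin N → Fin M)) [DecidablePred (· ∈ D)]
    (f : (Fin N → Fin M) → Bool)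
    (Valid : (Fin c → Bool) → (Fin m → Bool) → (Fin c → Fin N → Fin M) → Prop)
    [∀ ℓ y xs, Decidable (Valid ℓ y xs)]
    (hsound : ∀ ℓ y xs, Valid ℓ y xs → ∀ i, xs i ∈ D ∧ f (xs i) = ℓ i)
    (hcomplete : ∀ xs, (∀ i, xs i ∈ D) → ∃ y, Valid (fun i => f (xs i)) y xs)
    (hzero : ∀ ℓ xs, ¬ Valid ℓ (fun _ => false) xs)
    (p : ℕ) (hp : 0 < p)
    (hpN : p * Dpar p D f ≤ N)
    (hpc : p * Dpar p D f < 2 ^ c) :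
    Dpar p D f ≤
      Dpar p (Set.univ : Set (CSIdx N M c m → CSChar M))
        (cheatSheetFn D f Valid) := by
  classical
  by_contra hcon
  push_neg at hcon
  set Fcs := cheatSheetFn D f Valid with hFcs
  set T := Dpar p D f with hT
  set t := Dpar p (Set.univ : Set (CSIdx N M c m → CSChar M)) Fcs with ht
  have hlt : t < T := hcon
  have hTpos : 0 < T := by omega
  have hN : 0 < N := Nat.lt_of_lt_of_le (Nat.mul_pos hp hTpos) hpN
  haveI : Inhabited (CSChar M) := ⟨Sum.inr false⟩
  have hne : {t' | ∃ A : QAlg (CSIdx N M c m) (CSChar M),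
      A.Parallel p ∧ A.Computes Set.univ Fcs t'}.Nonempty := by
    obtain ⟨t0, A0, hA1, hA2⟩ := CSAux.exists_full_alg (ι := CSIdx N M c m) (α := CSChar M) hp Fcs
    exact ⟨t0, A0, hA1, hA2⟩
  have hmem : ∃ A : QAlg (CSIdx N M c m) (CSChar M),
      A.Parallel p ∧ A.Computes Set.univ Fcs t := Nat.sInf_mem hne
  obtain ⟨A, hApar, hAcomp⟩ := hmem
  have hnosolv : ¬ CSAux.Solvable p D f t (fun _ => none) := by
    rintro ⟨B, hB1, hB2⟩
    have hTle : T ≤ t := Nat.sInf_le ⟨B, hB1, fun x hx => hB2 x hx (fun j v hv => by simp at hv)⟩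
    omega
  -- the adversary loop
  have loop : ∀ k, k ≤ t → ∃ (z : CSIdx N M c m → CSChar M)
      (ρ : Fin c → Fin N → Option (Fin M)),
      (∀ i j v, ρ i j = some v → z (Sum.inl (i, j)) = Sum.inl v) ∧
      (∀ w, z (Sum.inr w) = Sum.inr false) ∧
      (∀ j, j < k → ∀ i jj, Sum.inl (i, jj) ∈ A.query (A.hist z j) → (ρ i jj).isSome) ∧
      (∀ i, ¬ CSAux.Solvable p D f (t - k) (ρ i)) := by
    intro k
    induction k with
    | zero =>
      intro _
      refine ⟨fun idx => Sum.casesOn idx (fun _ => Sum.inl default) (fun _ => Sum.inr false),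
        fun _ _ => none, ?_, ?_, ?_, ?_⟩
      · intro i j v hv; simp at hv
      · intro w; rfl
      · intro j hj; omega
      · intro i; simpa using hnosolv
    | succ k ih =>
      intro hk
      obtain ⟨z, ρ, h1, h2, h3, h4⟩ := ih (Nat.le_of_succ_le hk)
      set Q := A.query (A.hist z k) with hQ
      set Qi : Fin c → Finset (Fin N) :=
        fun i => Finset.univ.filter (fun j => Sum.inl (i, j) ∈ Q) with hQi
      have hQicard : ∀ i, (Qi i).card ≤ p := by
        intro i
        have hle : (Qi i).card ≤ Q.card := by
          apply Finset.card_le_card_of_injOn (fun j => Sum.inl (i, j))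
          · intro j hj; exact (Finset.mem_filter.mp hj).2
          · intro x _ y _ hxy; simpa using hxy
        exact hle.trans (hApar _)
      have hb : t - k = (t - (k+1)) + 1 := by omega
      have h4' : ∀ i, ¬ CSAux.Solvable p D f ((t - (k+1)) + 1) (ρ i) := by
        rw [← hb]; exact h4
      choose a ha using fun i => CSAux.solvable_adv hp hN (h4' i) (Qi i) (hQicard i)
      set ρ' : Fin c → Fin N → Option (Fin M) :=
        fun i => CSAux.updP (ρ i) (Qi i) (a i) with hρ'
      set z' : CSIdx N M c m → CSChar M := fun idx =>
        Sum.casesOn idx (fun pr => Sum.inl ((ρ' pr.1 pr.2).getD default))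
          (fun _ => Sum.inr false) with hz'
      have hext : ∀ i j v, ρ i j = some v → ρ' i j = some v :=
        fun i j v hv => CSAux.updP_extends hv
      have h1' : ∀ i j v, ρ' i j = some v → z' (Sum.inl (i, j)) = Sum.inl v := by
        intro i j v hv
        show Sum.inl ((ρ' i j).getD default) = Sum.inl v
        rw [hv]; rfl
      have hEq : ∀ j, j ≤ k → A.hist z' j = A.hist z j := by
        intro j hj
        apply CSAux.hist_congr
        intro j' hj' idx hidx
        obtain ⟨i, jj⟩ | w := idx
        · have hsome := h3 j' (lt_of_lt_of_le hj' hj) i jj hidx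
          obtain ⟨v, hv⟩ := Option.isSome_iff_exists.mp hsome
          rw [h1 i jj v hv, h1' i jj v (hext i jj v hv)]
        · rw [h2 w]
      refine ⟨z', ρ', h1', fun w => rfl, ?_, ?_⟩
      · intro j hj i jj hidx
        have hjk : j ≤ k := Nat.lt_succ_iff.mp hj
        rw [hEq j hjk] at hidx
        rcases Nat.lt_or_ge j k with hlt' | hge
        · obtain ⟨v, hv⟩ := Option.isSome_iff_exists.mp (h3 j hlt' i jj hidx)
          exact Option.isSome_iff_exists.mpr ⟨v, CSAux.updP_extends hv⟩
        · have hjeq : j = k := le_antisymm hjk hge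
          subst hjeq
          have hmemQ : jj ∈ Qi i := Finset.mem_filter.mpr ⟨Finset.mem_univ _, hidx⟩
          exact CSAux.updP_isSome hmemQ
      · exact ha
  obtain ⟨z, ρ, h1, h2, h3, h4⟩ := loop t le_rfl
  rw [Nat.sub_self] at h4
  have hxs0 : ∀ i (b : Bool), ∃ x, x ∈ D ∧ CSAux.Ext (ρ i) x ∧ f x = b :=
    fun i => CSAux.solvable_zero (h4 i)
  set S : Finset (Fin c → Bool) :=
    ((A.hist z t).filterMap
      (fun pr => Sum.casesOn pr.1 (fun _ => none) (fun w => some w.1))).toFinset with hS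
  have hScard : S.card < 2 ^ c := by
    calc S.card ≤ ((A.hist z t).filterMap
          (fun pr => Sum.casesOn pr.1 (fun _ => none) (fun w => some w.1))).length :=
          List.toFinset_card_le _
      _ ≤ (A.hist z t).length := List.length_filterMap_le _ _
      _ ≤ p * t := CSAux.hist_length_le A hApar z t
      _ < p * T := mul_lt_mul_of_pos_left hlt hp
      _ < 2 ^ c := hpc
  have hex : ∃ ℓs : Fin c → Bool, ℓs ∉ S := by
    by_contra hcon2
    push_neg at hcon2
    have hsub : (Finset.univ : Finset (Fin c → Bool)) ⊆ S := fun ℓ _ => hcon2 ℓ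
    have hcard := Finset.card_le_card hsub
    rw [Finset.card_univ] at hcard
    have hcf : Fintype.card (Fin c → Bool) = 2 ^ c := by simp [Fintype.card_fun]
    omega
  obtain ⟨ℓs, hℓs⟩ := hex
  choose xs hxs1 hxs2 hxs3 using fun i => hxs0 i (ℓs i)
  obtain ⟨y, hy⟩ := hcomplete xs hxs1
  set z1 : CSIdx N M c m → CSChar M := fun idx =>
    Sum.casesOn idx (fun pr => Sum.inl (xs pr.1 pr.2))
      (fun w => Sum.inr (if w.1 = ℓs then y w.2 else false)) with hz1
  have hhist : A.hist z1 t = A.hist z t := by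
    apply CSAux.hist_congr
    intro j hj idx hidx
    obtain ⟨i, jj⟩ | ⟨ℓ, jj⟩ := idx
    · obtain ⟨v, hv⟩ := Option.isSome_iff_exists.mp (h3 j hj i jj hidx)
      rw [h1 i jj v hv]
      show Sum.inl (xs i jj) = Sum.inl v
      rw [hxs2 i jj v hv]
    · have hmem2 : ((Sum.inr (ℓ, jj) : CSIdx N M c m), z (Sum.inr (ℓ, jj))) ∈ A.hist z t :=
        CSAux.mem_hist_of_query A z hj hidx
      have hℓS : ℓ ∈ S := by
        rw [hS]
        exact List.mem_toFinset.mpr (List.mem_filterMap.mpr ⟨_, hmem2, rfl⟩)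
      have hneq : ℓ ≠ ℓs := fun he => hℓs (he ▸ hℓS)
      rw [h2 (ℓ, jj)]
      show Sum.inr (if ℓ = ℓs then y jj else false) = Sum.inr false
      rw [if_neg hneq]
  have hvz : Fcs z = false := by
    rw [hFcs]
    unfold cheatSheetFn
    rw [if_neg]
    rintro ⟨-, hval⟩
    have hdy0 : decodeY z (fun i => f (decodeX z i)) = fun _ => false := by
      funext j
      show (z (Sum.inr (_, j))).elim (fun _ => false) id = false
      rw [h2]
      rfl
    rw [hdy0] at hval
    exact hzero _ _ hval
  have hdx : decodeX z1 = xs := by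
    funext i j
    rfl
  have haddr : (fun i => f (decodeX z1 i)) = ℓs := by
    funext i
    rw [hdx]
    exact hxs3 i
  have hdy : decodeY z1 ℓs = y := by
    funext j
    show (z1 (Sum.inr (ℓs, j))).elim (fun _ => false) id = y j
    have hz1v : z1 (Sum.inr (ℓs, j)) = Sum.inr (y j) := by
      show Sum.inr (if ℓs = ℓs then y j else false) = Sum.inr (y j)
      rw [if_pos rfl]
    rw [hz1v]
    rfl
  have hvz1 : Fcs z1 = true := by
    rw [hFcs]
    unfold cheatSheetFn
    rw [if_pos]
    constructor
    · intro i
      rw [hdx]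
      exact hxs1 i
    · rw [haddr, hdy, hdx]
      have hys : (fun i => f (xs i)) = ℓs := funext hxs3
      rw [← hys]
      exact hy
  have e1 := hAcomp z (Set.mem_univ z)
  have e2 := hAcomp z1 (Set.mem_univ z1)
  rw [hhist, e1, hvz, hvz1] at e2
  exact Bool.false_ne_true e2

end CheatSheet
end

section
/- Any deterministic p-parallel query algorithm computing the pointer chasing function POINTER_{N,k} (with N = 2^n nodes, chain length k) must make Ω(min(k, N/p)) rounds of queries. In particular, if an algorithm makes fewer than min(k/10, N/(10p)) rounds, there exist two inputs consistent with all its query answers whose outputs differ. -/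
/-- The pointer chasing function `POINTER_{N,k}` with `N = 2^(n+1)` nodes (each node
a string in `{0,1}^(n+1)`) and chain length `k`: the input encodes a function
`X : {0,1}^(n+1) → {0,1}^(n+1)` bit-by-bit, and the output is the last bit of
`X^k(0^(n+1))`. -/
def PTR (n k : ℕ) (z : ((Fin (n + 1) → Bool) × Fin (n + 1)) → Bool) : Bool :=
  ((fun (v : Fin (n + 1) → Bool) (b : Fin (n + 1)) => z (v, b))^[k]
      (fun _ => false)) (Fin.last n)

abbrev PNode (n : ℕ) : Type := Fin (n + 1) → Bool
abbrev PPos (n : ℕ) : Type := PNode n × Fin (n + 1)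

variable {n : ℕ}

noncomputable def pcPick (s : Finset (PNode n)) : PNode n :=
  if h : s.Nonempty then h.choose else fun _ => false

lemma pcPick_mem {s : Finset (PNode n)} (h : s.Nonempty) : pcPick s ∈ s := by
  rw [pcPick, dif_pos h]; exact h.choose_spec

def pcNxt (c : List (PNode n)) (u : PNode n) : PNode n :=
  c.getD (List.idxOf u c + 1) (fun _ => false)

def pcNodes (h : List (PPos n × Bool)) : Finset (PNode n) :=
  (h.map fun q => q.1.1).toFinset

lemma pcNodes_mono {h1 h2 : List (PPos n × Bool)} (hp : h1 <+: h2) :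
    pcNodes h1 ⊆ pcNodes h2 := by
  intro u hu
  rw [pcNodes, List.mem_toFinset, List.mem_map] at hu ⊢
  obtain ⟨q, hq, rfl⟩ := hu
  exact ⟨q, hp.subset hq, rfl⟩

lemma mem_pcNodes_of_mem {h : List (PPos n × Bool)} {q : PPos n × Bool} (hq : q ∈ h) :
    q.1.1 ∈ pcNodes h := by
  rw [pcNodes, List.mem_toFinset, List.mem_map]; exact ⟨q, hq, rfl⟩

noncomputable def pcFresh (A : QAlg (PPos n) Bool)
    (s : List (PNode n) × List (PPos n × Bool)) : PNode n :=
  pcPick ((s.1.toFinset ∪ pcNodes s.2 ∪ (A.query s.2).image Prod.fst)ᶜ)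

lemma card_PNode : Fintype.card (PNode n) = 2 ^ (n + 1) := by
  simp [PNode]

lemma pcFresh_not_mem (A : QAlg (PPos n) Bool) (s : List (PNode n) × List (PPos n × Bool))
    (h : (s.1.toFinset ∪ pcNodes s.2 ∪ (A.query s.2).image Prod.fst).card < 2 ^ (n + 1)) :
    pcFresh A s ∉ s.1.toFinset ∪ pcNodes s.2 ∪ (A.query s.2).image Prod.fst := by
  set u := s.1.toFinset ∪ pcNodes s.2 ∪ (A.query s.2).image Prod.fst with hu
  have hne : (uᶜ : Finset (PNode n)).Nonempty := by
    rw [← Finset.card_pos, Finset.card_compl, card_PNode]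
    omega
  have := pcPick_mem hne
  rw [Finset.mem_compl] at this
  exact this

noncomputable def adv (A : QAlg (PPos n) Bool) : ℕ → List (PNode n) × List (PPos n × Bool)
  | 0 => ([fun _ => false], [])
  | s + 1 =>
      ((adv A s).1 ++ [pcFresh A (adv A s)],
       (adv A s).2 ++ ((A.query (adv A s).2).toList.map
         fun q => (q, pcNxt ((adv A s).1 ++ [pcFresh A (adv A s)]) q.1 q.2)))

lemma adv_succ (A : QAlg (PPos n) Bool) (s : ℕ) :
    adv A (s + 1) =
      ((adv A s).1 ++ [pcFresh A (adv A s)],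
       (adv A s).2 ++ ((A.query (adv A s).2).toList.map
         fun q => (q, pcNxt ((adv A s).1 ++ [pcFresh A (adv A s)]) q.1 q.2))) := rfl

lemma pcFilter_card (b : Bool) :
    (Finset.univ.filter fun v : PNode n => v (Fin.last n) = b).card = 2 ^ n := by
  rw [← Fintype.card_subtype]
  let e : {v : PNode n // v (Fin.last n) = b} ≃ (Fin n → Bool) :=
  { toFun := fun v => fun i => v.1 i.castSucc
    invFun := fun w => ⟨Fin.snoc w b, by simp⟩
    left_inv := fun v => Subtype.ext (funext fun i => by
      refine Fin.lastCases ?_ (fun j => ?_) i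
      · simp [v.2]
      · simp)
    right_inv := fun w => funext fun i => by simp }
  rw [Fintype.card_congr e]
  simp

lemma pcNodes_card_le (h : List (PPos n × Bool)) : (pcNodes h).card ≤ h.length := by
  rw [pcNodes]
  exact (List.toFinset_card_le _).trans (le_of_eq (List.length_map _))

lemma pcTrivial (n k p : ℕ) (hp : 0 < p) :
    ∃ T, ∃ A : QAlg (PPos n) Bool, A.Parallel p ∧ A.Computes Set.univ (PTR n k) T := by
  classical
  set L : List (PPos n) := (Finset.univ : Finset (PPos n)).toList with hLdef
  set A0 : QAlg (PPos n) Bool :=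
    { query := fun h => (L[h.length]?.toList).toFinset
      out := fun h => PTR n k fun i => decide ((i, true) ∈ h) } with hA0
  have hq : A0.query = fun h => (L[h.length]?.toList).toFinset := rfl
  have ho : A0.out = fun h => PTR n k fun i => decide ((i, true) ∈ h) := rfl
  refine ⟨L.length, A0, ?_, ?_⟩
  · intro h
    simp only [hq]
    refine le_trans (List.toFinset_card_le _) ?_
    rcases L[h.length]? with _ | a <;> simp <;> omega
  · intro x _
    have hist0 : ∀ s ≤ L.length,
        QAlg.hist A0 x s = (L.take s).map fun i => (i, x i) := by
      intro s
      induction s with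
      | zero => intro _; simp [QAlg.hist]
      | succ s ih =>
        intro hs
        have hslt : s < L.length := hs
        rw [QAlg.hist, ih (by omega), hq]
        dsimp only
        have hlen : ((L.take s).map fun i => (i, x i)).length = s := by
          simp [Nat.min_eq_left (le_of_lt hslt)]
        rw [hlen]
        rw [List.getElem?_eq_getElem hslt, List.take_succ, List.getElem?_eq_getElem hslt]
        simp only [Option.toList_some, List.toFinset_cons, List.toFinset_nil,
          List.map_append]
        rw [show (insert L[s] ∅ : Finset (PPos n)) = {L[s]} from rfl,
          Finset.toList_singleton]
    have h1 := hist0 L.length le_rfl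
    simp only [ho]
    rw [h1, List.take_length]
    have harg : (fun i => decide ((i, true) ∈ L.map fun j => (j, x j))) = x := by
      funext i
      cases hxi : x i with
      | false =>
        rw [decide_eq_false_iff_not]
        rintro hmem
        rw [List.mem_map] at hmem
        obtain ⟨j, _, hj⟩ := hmem
        rw [Prod.ext_iff] at hj
        obtain ⟨h2, h3⟩ := hj
        simp only at h2 h3
        rw [h2] at h3
        rw [hxi] at h3
        exact Bool.false_ne_true h3
      | true =>
        rw [decide_eq_true_eq]
        rw [List.mem_map]
        exact ⟨i, by simp [hLdef], by rw [hxi]⟩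
    rw [harg]


/-- Any deterministic `p`-parallel algorithm computing pointer
chasing (`N = 2^(n+1)` nodes, chain length `k`) needs `Ω(min(k, N/p))` rounds;
explicitly, at least `min(k/10, N/(10p))` rounds — an algorithm making fewer rounds
leaves both a `0`-input and a `1`-input consistent with its answers. -/
theorem pointer_chasing_det_parallel_lower (n k p : ℕ) (hp : 0 < p) :
    min (k / 10) (2 ^ (n + 1) / (10 * p)) ≤
      Dpar p (Set.univ : Set (((Fin (n + 1) → Bool) × Fin (n + 1)) → Bool))
        (PTR n k) := by
  classical
  rw [Dpar]
  obtain ⟨T, AT, hAT⟩ := pcTrivial n k p hp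
  refine le_csInf ⟨T, AT, hAT⟩ ?_
  rintro t ⟨A, hpar, hcomp⟩
  by_contra hlt
  push_neg at hlt
  rw [lt_min_iff] at hlt
  -- arithmetic
  have hk : 10 * (t + 1) ≤ k := by
    have h1 : t + 1 ≤ k / 10 := hlt.1
    have := (Nat.le_div_iff_mul_le (by norm_num : (0:ℕ) < 10)).1 h1
    omega
  have hN : 10 * p * (t + 1) ≤ 2 ^ (n + 1) := by
    have h1 : t + 1 ≤ 2 ^ (n + 1) / (10 * p) := hlt.2
    have h2 := (Nat.le_div_iff_mul_le (by positivity : 0 < 10 * p)).1 h1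
    calc 10 * p * (t + 1) = (t + 1) * (10 * p) := by ring
      _ ≤ 2 ^ (n + 1) := h2
  have hpt : t ≤ p * t := Nat.le_mul_of_pos_left t hp
  have hBig : p * t + t + p + 1 ≤ 2 ^ (n + 1) := by nlinarith
  have hSmall : p * t + t + 2 ≤ 2 ^ n := by
    have h2 : (2:ℕ) ^ (n + 1) = 2 * 2 ^ n := by ring
    nlinarith
  -- basic facts about the adversary run
  have hlen : ∀ s, ((adv A s).1).length = s + 1 := by
    intro s
    induction s with
    | zero => rfl
    | succ s ih => rw [adv_succ]; simp [ih]
  have hhlen : ∀ s, ((adv A s).2).length ≤ p * s := by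
    intro s
    induction s with
    | zero => simp [adv]
    | succ s ih =>
      rw [adv_succ]
      simp only [List.length_append, List.length_map, Finset.length_toList]
      have := hpar (adv A s).2
      have : p * (s + 1) = p * s + p := by ring
      omega
  have hfresh : ∀ s < t, pcFresh A (adv A s) ∉
      ((adv A s).1.toFinset ∪ pcNodes (adv A s).2 ∪ (A.query (adv A s).2).image Prod.fst) := by
    intro s hs
    apply pcFresh_not_mem
    have c1 : ((adv A s).1.toFinset).card ≤ s + 1 := by
      refine le_trans (List.toFinset_card_le _) ?_
      rw [hlen]
    have c2 : (pcNodes (adv A s).2).card ≤ p * s := le_trans (pcNodes_card_le _) (hhlen s)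
    have c3 : ((A.query (adv A s).2).image Prod.fst).card ≤ p :=
      le_trans (Finset.card_image_le) (hpar _)
    have := Finset.card_union_le ((adv A s).1.toFinset ∪ pcNodes (adv A s).2)
      ((A.query (adv A s).2).image Prod.fst)
    have := Finset.card_union_le ((adv A s).1.toFinset) (pcNodes (adv A s).2)
    have hps : p * s ≤ p * t := Nat.mul_le_mul_left p (le_of_lt hs)
    omega
  have hfresh' : ∀ s < t, pcFresh A (adv A s) ∉ (adv A s).1 ∧
      pcFresh A (adv A s) ∉ pcNodes (adv A s).2 ∧
      ∀ q ∈ A.query (adv A s).2, q.1 ≠ pcFresh A (adv A s) := by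
    intro s hs
    have h := hfresh s hs
    simp only [Finset.mem_union, List.mem_toFinset, not_or] at h
    refine ⟨h.1.1, h.1.2, ?_⟩
    intro q hq he
    exact h.2 (Finset.mem_image.2 ⟨q, hq, he⟩)
  have hpre : ∀ s r, s ≤ r → (adv A s).1 <+: (adv A r).1 ∧ (adv A s).2 <+: (adv A r).2 := by
    intro s r h
    induction r with
    | zero =>
      have : s = 0 := by omega
      subst this
      exact ⟨List.prefix_rfl, List.prefix_rfl⟩
    | succ r ih =>
      rcases Nat.eq_or_lt_of_le h with rfl | h'
      · exact ⟨List.prefix_rfl, List.prefix_rfl⟩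
      · have hs : s ≤ r := by omega
        refine ⟨(ih hs).1.trans ?_, (ih hs).2.trans ?_⟩
        · rw [adv_succ]; exact List.prefix_append _ _
        · rw [adv_succ]; exact List.prefix_append _ _
  have havoid : ∀ r ≤ t, ∀ s ≤ r, ∀ u, u ∈ pcNodes (adv A s).2 →
      u ∈ (adv A r).1 → u ∈ (adv A s).1 := by
    intro r
    induction r with
    | zero =>
      intro _ s hs u hu hmem
      have : s = 0 := by omega
      subst this
      exact hmem
    | succ r ih =>
      intro hr s hs u hu hmem
      rcases Nat.eq_or_lt_of_le hs with rfl | hs'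
      · exact hmem
      · have hs'' : s ≤ r := by omega
        rw [adv_succ] at hmem
        rcases List.mem_append.1 hmem with h1 | h2
        · exact ih (by omega) s hs'' u hu h1
        · exfalso
          have h2' : u = pcFresh A (adv A r) := by simpa using h2
          have : u ∈ pcNodes (adv A r).2 := pcNodes_mono (hpre s r hs'').2 hu
          exact (hfresh' r (by omega)).2.1 (h2' ▸ this)
  have hnd : ∀ s ≤ t, ((adv A s).1).Nodup := by
    intro s
    induction s with
    | zero => intro _; simp [adv]
    | succ s ih =>
      intro hs
      rw [adv_succ]
      have h1 := ih (by omega)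
      have h2 := (hfresh' s (by omega)).1
      simp only [List.nodup_append, List.nodup_singleton, true_and]
      exact ⟨h1, by simpa using fun a ha (e : a = pcFresh A (adv A s)) => h2 (e ▸ ha)⟩
  have hidx : ∀ s ≤ t, ∀ q ∈ (adv A s).2,
      List.idxOf q.1.1 (adv A s).1 + 1 ≠ s + 1 := by
    intro s
    induction s with
    | zero => intro _ q hq; simp [adv] at hq
    | succ s ih =>
      intro hs q hq
      rw [adv_succ] at hq ⊢
      simp only at hq ⊢
      rcases List.mem_append.1 hq with h1 | h2
      · have IH := ih (by omega) q h1
        by_cases hc : q.1.1 ∈ (adv A s).1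
        · rw [List.idxOf_append_of_mem hc]
          have := List.idxOf_lt_length_iff.2 hc
          rw [hlen s] at this
          omega
        · have hfr : q.1.1 ≠ pcFresh A (adv A s) := by
            intro e
            exact (hfresh' s (by omega)).2.1 (e ▸ mem_pcNodes_of_mem h1)
          have hnm : q.1.1 ∉ (adv A s).1 ++ [pcFresh A (adv A s)] := by
            simp [hc, hfr]
          rw [List.idxOf_eq_length_iff.2 hnm]
          simp [hlen s]
      · obtain ⟨i, hi, rfl⟩ := List.mem_map.1 h2
        have hfr : i.1 ≠ pcFresh A (adv A s) :=
          (hfresh' s (by omega)).2.2 i (Finset.mem_toList.1 hi)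
        by_cases hc : i.1 ∈ (adv A s).1
        · rw [List.idxOf_append_of_mem hc]
          have := List.idxOf_lt_length_iff.2 hc
          rw [hlen s] at this
          omega
        · have hnm : i.1 ∉ (adv A s).1 ++ [pcFresh A (adv A s)] := by
            simp [hc, hfr]
          rw [List.idxOf_eq_length_iff.2 hnm]
          simp [hlen s]
  -- the key construction: complete the chain with a fresh self-looping node `w`
  have key : ∀ w : PNode n, w ∉ (adv A t).1 → w ∉ pcNodes (adv A t).2 →
      QAlg.hist A (fun q : PPos n => pcNxt ((adv A t).1 ++ [w, w]) q.1 q.2) t = (adv A t).2 ∧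
      PTR n k (fun q : PPos n => pcNxt ((adv A t).1 ++ [w, w]) q.1 q.2) = w (Fin.last n) := by
    intro w hwC hwH
    have htrans : ∀ s ≤ t, ∀ u, u ∈ pcNodes (adv A s).2 →
        List.idxOf u (adv A s).1 + 1 ≠ s + 1 →
        pcNxt ((adv A t).1 ++ [w, w]) u = pcNxt (adv A s).1 u := by
      intro s hs u hu hidxu
      by_cases hc : u ∈ (adv A s).1
      · obtain ⟨r1, hr1⟩ := (hpre s t hs).1
        have hidxlt : List.idxOf u (adv A s).1 + 1 < (adv A s).1.length := by
          have h1 := List.idxOf_lt_length_iff.2 hc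
          rw [hlen s] at h1 ⊢
          omega
        rw [pcNxt, pcNxt, ← hr1, List.append_assoc, List.idxOf_append_of_mem hc,
          List.getD_append _ _ _ _ hidxlt]
      · have hct : u ∉ (adv A t).1 := fun hmem => hc (havoid t le_rfl s hs u hu hmem)
        have hwne : u ≠ w := by
          intro e
          exact hwH (e ▸ pcNodes_mono (hpre s t hs).2 hu)
        have hnm : u ∉ (adv A t).1 ++ [w, w] := by simp [hct, hwne]
        rw [pcNxt, pcNxt, List.idxOf_eq_length_iff.2 hnm, List.idxOf_eq_length_iff.2 hc,
          List.getD_eq_default _ _ (by omega), List.getD_eq_default _ _ (by omega)]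
    have hhist : ∀ s ≤ t,
        QAlg.hist A (fun q : PPos n => pcNxt ((adv A t).1 ++ [w, w]) q.1 q.2) s
          = (adv A s).2 := by
      intro s
      induction s with
      | zero => intro _; rfl
      | succ s ih =>
        intro hs
        rw [QAlg.hist, ih (by omega), adv_succ]
        simp only
        congr 1
        refine List.map_congr_left ?_
        intro i hiS
        have hmem : (i, pcNxt ((adv A s).1 ++ [pcFresh A (adv A s)]) i.1 i.2)
            ∈ (adv A (s + 1)).2 := by
          rw [adv_succ]
          exact List.mem_append_right _ (List.mem_map.2 ⟨i, hiS, rfl⟩)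
        have h1 := hidx (s + 1) hs _ hmem
        have h2 : i.1 ∈ pcNodes (adv A (s + 1)).2 := mem_pcNodes_of_mem hmem
        have h3 := htrans (s + 1) hs i.1 h2 h1
        have h4 : pcNxt ((adv A t).1 ++ [w, w]) i.1 i.2
            = pcNxt ((adv A s).1 ++ [pcFresh A (adv A s)]) i.1 i.2 := by
          have := congrFun h3 i.2
          rw [adv_succ] at this
          exact this
        rw [h4]
    refine ⟨hhist t le_rfl, ?_⟩
    -- now compute PTR on this input
    have hfun : (fun (v : Fin (n + 1) → Bool) (b : Fin (n + 1)) =>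
        (fun q : PPos n => pcNxt ((adv A t).1 ++ [w, w]) q.1 q.2) (v, b))
        = pcNxt ((adv A t).1 ++ [w, w]) := rfl
    rw [PTR, hfun]
    have hhead : ((adv A t).1 ++ [w, w]).getD 0 (fun _ => false) = (fun _ => false) := by
      obtain ⟨r0, hr0⟩ := (hpre 0 t (by omega)).1
      rw [← hr0]
      rfl
    have hiter : ∀ i ≤ t + 1, (pcNxt ((adv A t).1 ++ [w, w]))^[i] (fun _ => false)
        = ((adv A t).1 ++ [w, w]).getD i (fun _ => false) := by
      intro i
      induction i with
      | zero => intro _; exact hhead.symm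
      | succ i ih =>
        intro hi
        rw [Function.iterate_succ_apply', ih (by omega)]
        have hilt : i < (adv A t).1.length := by rw [hlen]; omega
        have hgd : ((adv A t).1 ++ [w, w]).getD i (fun _ => false)
            = (adv A t).1[i] := by
          rw [List.getD_append _ _ _ _ hilt]
          exact List.getD_eq_getElem _ _ hilt
        rw [pcNxt, hgd]
        have hidx0 : List.idxOf ((adv A t).1[i]) ((adv A t).1 ++ [w, w]) = i := by
          rw [List.idxOf_append_of_mem (List.getElem_mem hilt),
            List.Nodup.idxOf_getElem (hnd t le_rfl)]
        rw [hidx0]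
    have hw1 : (pcNxt ((adv A t).1 ++ [w, w]))^[t + 1] (fun _ => false) = w := by
      rw [hiter (t + 1) le_rfl,
        List.getD_append_right _ _ _ _ (by rw [hlen] : (adv A t).1.length ≤ t + 1)]
      simp [hlen]
    have hfix : pcNxt ((adv A t).1 ++ [w, w]) w = w := by
      rw [pcNxt, List.idxOf_append_of_notMem hwC]
      rw [show List.idxOf w [w, w] = 0 from List.idxOf_cons_self]
      rw [List.getD_append_right _ _ _ _ (by rw [hlen]; omega)]
      simp [hlen]
    obtain ⟨m, hm⟩ : ∃ m, k = m + (t + 1) := ⟨k - (t + 1), by omega⟩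
    rw [hm, Function.iterate_add_apply, hw1, Function.iterate_fixed hfix]
  -- produce the two fresh endpoints
  have hwex : ∀ b : Bool, ∃ w : PNode n, w ∉ (adv A t).1 ∧ w ∉ pcNodes (adv A t).2 ∧
      w (Fin.last n) = b := by
    intro b
    have hucard : ((adv A t).1.toFinset ∪ pcNodes (adv A t).2).card ≤ p * t + t + 1 := by
      have c1 : ((adv A t).1.toFinset).card ≤ t + 1 := by
        refine le_trans (List.toFinset_card_le _) ?_
        rw [hlen]
      have c2 : (pcNodes (adv A t).2).card ≤ p * t := le_trans (pcNodes_card_le _) (hhlen t)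
      have := Finset.card_union_le ((adv A t).1.toFinset) (pcNodes (adv A t).2)
      omega
    have hne : ((Finset.univ.filter fun v : PNode n => v (Fin.last n) = b)
        \ ((adv A t).1.toFinset ∪ pcNodes (adv A t).2)).Nonempty := by
      rw [← Finset.card_pos]
      have h1 := Finset.le_card_sdiff ((adv A t).1.toFinset ∪ pcNodes (adv A t).2)
        (Finset.univ.filter fun v : PNode n => v (Fin.last n) = b)
      rw [pcFilter_card b] at h1
      have h3 : 0 < 2 ^ n - ((adv A t).1.toFinset ∪ pcNodes (adv A t).2).card := by
        clear h1 key hfresh hfresh' hpre havoid hnd hidx hcomp hpar hAT hlen hhlen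
        omega
      exact lt_of_lt_of_le h3 h1
    obtain ⟨w, hw⟩ := hne
    rw [Finset.mem_sdiff, Finset.mem_filter] at hw
    refine ⟨w, ?_, ?_, hw.1.2⟩
    · intro h
      exact hw.2 (Finset.mem_union_left _ (List.mem_toFinset.2 h))
    · intro h
      exact hw.2 (Finset.mem_union_right _ h)
  obtain ⟨w0, hw01, hw02, hw03⟩ := hwex false
  obtain ⟨w1, hw11, hw12, hw13⟩ := hwex true
  have k0 := key w0 hw01 hw02
  have k1 := key w1 hw11 hw12
  have e0 := hcomp (fun q : PPos n => pcNxt ((adv A t).1 ++ [w0, w0]) q.1 q.2) (Set.mem_univ _)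
  have e1 := hcomp (fun q : PPos n => pcNxt ((adv A t).1 ++ [w1, w1]) q.1 q.2) (Set.mem_univ _)
  rw [k0.1, k0.2, hw03] at e0
  rw [k1.1, k1.2, hw13] at e1
  rw [e0] at e1
  exact Bool.false_ne_true e1
end
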